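/- arXiv:1612.05057 — 2 statements merged into one kernel-verified Lean document; each statement's English description precedes it below -/
import Mathlib

section
/- Assume h = 0, the set of saddle points of the Lagrangian l is nonempty, M₁ᵏ ∈ S₊(H), M₁ᵏ ⪰ M₁^{k+1}, M₂ᵏ ∈ S₊(G) for all k ≥ 0, and additionally there exists α > 0 such that A*A ∈ P_α(H) and 2M₂^{k+1} ⪰ M₂ᵏ ⪰ M₂^{k+1} for all k ≥ 0. Then the sequence (xᵏ, zᵏ, yᵏ)_{k≥0} generated by the variable-metric ADMM algorithm converges weakly to a saddle point of l. -/
open scoped InnerProductSpace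
open Filter

noncomputable section

section OpDefs

variable {E F : Type*} [NormedAddCommGroup E] [InnerProductSpace ℝ E]
  [NormedAddCommGroup F] [InnerProductSpace ℝ F]

/-- `U ∈ S₊(E)`: continuous linear, self-adjoint and positive semidefinite. -/
def IsSplusOp (U : E →L[ℝ] E) : Prop :=
  (∀ x y : E, ⟪U x, y⟫_ℝ = ⟪x, U y⟫_ℝ) ∧ ∀ x : E, 0 ≤ ⟪x, U x⟫_ℝ

/-- The squared seminorm `‖x‖²_U := ⟪x, U x⟫`. -/
def opSq (U : E →L[ℝ] E) (x : E) : ℝ := ⟪x, U x⟫_ℝ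

/-- Loewner order `U ⪰ V`. -/
def opLE (U V : E →L[ℝ] E) : Prop := ∀ x : E, ⟪x, V x⟫_ℝ ≤ ⟪x, U x⟫_ℝ

/-- `U ∈ P_α(E)`, i.e. `U ∈ S₊(E)` and `U ⪰ α·Id`. -/
def IsPalphaOp (α : ℝ) (U : E →L[ℝ] E) : Prop :=
  IsSplusOp U ∧ ∀ x : E, α * ‖x‖ ^ 2 ≤ ⟪x, U x⟫_ℝ

/-- Properness of an extended-real-valued function. -/
def ERealProper (f : E → EReal) : Prop := (∀ x, f x ≠ ⊥) ∧ ∃ x, f x ≠ ⊤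

/-- Convexity of an extended-real-valued function. -/
def ERealConvex (f : E → EReal) : Prop :=
  ∀ x y : E, ∀ a b : ℝ, 0 ≤ a → 0 ≤ b → a + b = 1 →
    f (a • x + b • y) ≤ (a : EReal) * f x + (b : EReal) * f y

/-- Weak convergence of a sequence in a Hilbert space, tested against inner products. -/
def WeakConv (u : ℕ → E) (p : E) : Prop :=
  ∀ w : E, Tendsto (fun k => ⟪u k, w⟫_ℝ) atTop (nhds ⟪p, w⟫_ℝ)

/-- The Lagrangian `l(x,z,y) = f(x) + g(z) + ⟪y, Ax - z⟫`. -/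
def Lagr (f : E → EReal) (g : F → EReal) (A : E →L[ℝ] F) (p : E) (q v : F) : EReal :=
  f p + g q + ((⟪v, A p - q⟫_ℝ : ℝ) : EReal)

/-- The Lagrangian with an additional smooth summand `h`:
`l(x,z,y) = f(x) + h(x) + g(z) + ⟪y, Ax - z⟫`. -/
def LagrH (f : E → EReal) (h : E → ℝ) (g : F → EReal) (A : E →L[ℝ] F)
    (p : E) (q v : F) : EReal :=
  f p + ((h p : ℝ) : EReal) + g q + ((⟪v, A p - q⟫_ℝ : ℝ) : EReal)

/-- `(xs, zs, ys)` is a saddle point of `l`. -/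
def IsSaddle (l : E → F → F → EReal) (xs : E) (zs ys : F) : Prop :=
  ∀ (p : E) (q v : F), l xs zs v ≤ l xs zs ys ∧ l xs zs ys ≤ l p q ys

/-- `xk1` is a minimizer of `u ↦ f u + (c/2)‖Au - zk + c⁻¹ yk‖² + (1/2)‖u - xk‖²_M`. -/
def IsXUpdate (f : E → EReal) (A : E →L[ℝ] F) (c : ℝ) (M : E →L[ℝ] E)
    (xk : E) (zk yk : F) (xk1 : E) : Prop :=
  ∀ u : E,
    f xk1 + (((c/2) * ‖A xk1 - zk + c⁻¹ • yk‖ ^ 2 + (1/2) * opSq M (xk1 - xk) : ℝ) : EReal) ≤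
    f u + (((c/2) * ‖A u - zk + c⁻¹ • yk‖ ^ 2 + (1/2) * opSq M (u - xk) : ℝ) : EReal)

/-- `xk1` is a minimizer of the `x`-subproblem with linearized smooth part:
`u ↦ f u + ⟪u - xk, ∇h(xk)⟫ + (c/2)‖Au - zk + c⁻¹ yk‖² + (1/2)‖u - xk‖²_M`. -/
def IsXUpdateGrad (f : E → EReal) (h' : E → E) (A : E →L[ℝ] F) (c : ℝ) (M : E →L[ℝ] E)
    (xk : E) (zk yk : F) (xk1 : E) : Prop :=
  ∀ u : E,
    f xk1 + ((⟪xk1 - xk, h' xk⟫_ℝ + (c/2) * ‖A xk1 - zk + c⁻¹ • yk‖ ^ 2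
        + (1/2) * opSq M (xk1 - xk) : ℝ) : EReal) ≤
    f u + ((⟪u - xk, h' xk⟫_ℝ + (c/2) * ‖A u - zk + c⁻¹ • yk‖ ^ 2
        + (1/2) * opSq M (u - xk) : ℝ) : EReal)

/-- `zk1` is a minimizer of `w ↦ g w + (c/2)‖Ax - w + c⁻¹ yk‖² + (1/2)‖w - zk‖²_M`. -/
def IsZUpdate (g : F → EReal) (c : ℝ) (M : F →L[ℝ] F)
    (Ax zk yk zk1 : F) : Prop :=
  ∀ w : F,
    g zk1 + (((c/2) * ‖Ax - zk1 + c⁻¹ • yk‖ ^ 2 + (1/2) * opSq M (zk1 - zk) : ℝ) : EReal) ≤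
    g w + (((c/2) * ‖Ax - w + c⁻¹ • yk‖ ^ 2 + (1/2) * opSq M (w - zk) : ℝ) : EReal)

end OpDefs

/-!
The first-order conditions of the two subproblems say that
`-(A* (y⁺ + c (z⁺ - z)) + M₁ᵏ (x⁺ - x)) ∈ ∂f(x⁺)` and `y⁺ - M₂ᵏ (z⁺ - z) ∈ ∂g(z⁺)`.
Pairing them, by monotonicity of `∂f` and `∂g`, with the subgradients at a saddle point shows that
the variable-metric distance to any saddle point is a Fejér functional, which decreases by the
squared step lengths; the condition `2 M₂ᵏ⁺¹ ⪰ M₂ᵏ` absorbs the cross term `⟪z⁺ - z, y⁺ - y⟫`.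
Hence the iterates are bounded (for `x` through `A* A ⪰ α`) and their steps vanish, so passing to
the limit in the subgradient inequalities, with weak lower semicontinuity of `f` and `g`, shows
that every weak cluster point is a saddle point. The decreasing metrics converge strongly (Vigier),
and Opial's argument for the limit metrics shows that there is only one weak cluster point.
-/

open Topology

section QuadraticForm

variable {E : Type*} [NormedAddCommGroup E] [InnerProductSpace ℝ E]

lemma opSq_smul (U : E →L[ℝ] E) (t : ℝ) (v : E) : opSq U (t • v) = t ^ 2 * opSq U v := by
  simp only [opSq, map_smul, real_inner_smul_left, real_inner_smul_right]
  ring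

lemma opSq_le_opNorm_mul_sq (U : E →L[ℝ] E) (v : E) : opSq U v ≤ ‖U‖ * ‖v‖ ^ 2 :=
  calc opSq U v ≤ ‖v‖ * ‖U v‖ := real_inner_le_norm _ _
    _ ≤ ‖v‖ * (‖U‖ * ‖v‖) := by gcongr; exact U.le_opNorm v
    _ = ‖U‖ * ‖v‖ ^ 2 := by ring

namespace IsSplusOp

variable {U : E →L[ℝ] E}

lemma opSq_nonneg (hU : IsSplusOp U) (v : E) : 0 ≤ opSq U v := hU.2 v

lemma opSq_add (hU : IsSplusOp U) (a b : E) :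
    opSq U (a + b) = opSq U a + 2 * ⟪U a, b⟫_ℝ + opSq U b := by
  have h₁ : ⟪a, U b⟫_ℝ = ⟪U a, b⟫_ℝ := (hU.1 a b).symm
  have h₂ : ⟪b, U a⟫_ℝ = ⟪U a, b⟫_ℝ := real_inner_comm _ _
  simp only [opSq, map_add, inner_add_left, inner_add_right]
  linarith

lemma opSq_sub (hU : IsSplusOp U) (a b : E) :
    opSq U (a - b) = opSq U a - 2 * ⟪U a, b⟫_ℝ + opSq U b := by
  rw [sub_eq_add_neg, hU.opSq_add, inner_neg_right, ← neg_one_smul ℝ b, opSq_smul]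
  ring

lemma two_mul_inner_sub_eq (hU : IsSplusOp U) (a b : E) :
    2 * ⟪U (a - b), a⟫_ℝ = opSq U a - opSq U b + opSq U (a - b) := by
  have h := hU.opSq_sub a (a - b)
  rw [sub_sub_cancel] at h
  have h' : ⟪U a, a - b⟫_ℝ = ⟪U (a - b), a⟫_ℝ := by rw [hU.1]; exact real_inner_comm _ _
  linarith

lemma two_mul_inner_le (hU : IsSplusOp U) (a b : E) :
    2 * ⟪U a, b⟫_ℝ ≤ opSq U a + opSq U b := by
  linarith [hU.opSq_sub a b, hU.opSq_nonneg (a - b)]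

lemma inner_sq_le (hU : IsSplusOp U) (a b : E) : ⟪U a, b⟫_ℝ ^ 2 ≤ opSq U a * opSq U b := by
  have hquad : ∀ t : ℝ, 0 ≤ opSq U b * (t * t) + 2 * ⟪U a, b⟫_ℝ * t + opSq U a := fun t => by
    have h := hU.opSq_nonneg (a + t • b)
    rw [hU.opSq_add, opSq_smul, inner_smul_right] at h
    linarith
  have := discrim_le_zero hquad
  rw [discrim] at this
  linarith

lemma abs_inner_le (hU : IsSplusOp U) (a b : E) :
    |⟪U a, b⟫_ℝ| ≤ √(opSq U a) * √(opSq U b) := by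
  rw [← Real.sqrt_mul (hU.opSq_nonneg a), ← Real.sqrt_sq_eq_abs]
  exact Real.sqrt_le_sqrt (hU.inner_sq_le a b)

lemma sq_norm_apply_le {C : ℝ} (hU : IsSplusOp U) (hC : ∀ v, opSq U v ≤ C * ‖v‖ ^ 2) (d : E) :
    ‖U d‖ ^ 2 ≤ C * opSq U d := by
  have hcs := hU.inner_sq_le d (U d)
  rw [real_inner_self_eq_norm_sq] at hcs
  have hCd : 0 ≤ C * opSq U d := by
    rcases le_or_gt 0 C with hC0 | hC0
    · exact mul_nonneg hC0 (hU.opSq_nonneg d)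
    · have : opSq U d ≤ 0 := (hC d).trans (mul_nonpos_of_nonpos_of_nonneg hC0.le (sq_nonneg _))
      nlinarith [hU.opSq_nonneg d]
  rcases (sq_nonneg ‖U d‖).eq_or_lt with h0 | hpos
  · rw [← h0]; exact hCd
  · have := mul_le_mul_of_nonneg_left (hC (U d)) (hU.opSq_nonneg d)
    nlinarith

end IsSplusOp

end QuadraticForm

section AntitoneFamily

variable {E : Type*} [NormedAddCommGroup E] [InnerProductSpace ℝ E] {M : ℕ → E →L[ℝ] E}

lemma opLE_of_le (hM : ∀ k, opLE (M k) (M (k + 1))) {i j : ℕ} (hij : i ≤ j) :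
    opLE (M i) (M j) := by
  intro v
  induction hij with
  | refl => exact le_rfl
  | step _ ih => exact (hM _ v).trans ih

lemma sq_norm_sub_apply_le_of_antitone (hM : ∀ k, IsSplusOp (M k))
    (hanti : ∀ k, opLE (M k) (M (k + 1))) (d : E) {i j : ℕ} (hij : i ≤ j) :
    ‖M i d - M j d‖ ^ 2 ≤ ‖M 0‖ * (opSq (M i) d - opSq (M j) d) := by
  have hN : IsSplusOp (M i - M j) :=
    ⟨fun a b => by simp only [sub_apply, inner_sub_left, inner_sub_right, (hM i).1, (hM j).1],
      fun v => by
        simpa only [sub_apply, inner_sub_right, sub_nonneg] using opLE_of_le hanti hij v⟩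
  have hNC : ∀ v, opSq (M i - M j) v ≤ ‖M 0‖ * ‖v‖ ^ 2 := fun v => by
    have h₀ := opLE_of_le hanti (Nat.zero_le i) v
    have := (hM j).opSq_nonneg v
    calc opSq (M i - M j) v ≤ opSq (M 0) v := by
          simp only [opSq, sub_apply, inner_sub_right] at h₀ this ⊢
          linarith
      _ ≤ ‖M 0‖ * ‖v‖ ^ 2 := opSq_le_opNorm_mul_sq _ _
  simpa only [opSq, sub_apply, inner_sub_right] using hN.sq_norm_apply_le hNC d

/-- Vigier's theorem for decreasing sequences. -/
lemma exists_tendsto_apply_of_antitone [CompleteSpace E] (hM : ∀ k, IsSplusOp (M k))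
    (hanti : ∀ k, opLE (M k) (M (k + 1))) :
    ∃ L : E → E, ∀ d, Tendsto (fun k => M k d) atTop (𝓝 (L d)) := by
  have hcauchy : ∀ d, CauchySeq fun k => M k d := by
    intro d
    have hs : CauchySeq fun k => opSq (M k) d :=
      (tendsto_atTop_ciInf (antitone_nat_of_succ_le fun k => hanti k d)
        ⟨0, by rintro _ ⟨k, rfl⟩; exact (hM k).opSq_nonneg d⟩).cauchySeq
    rw [Metric.cauchySeq_iff'] at hs ⊢
    intro ε hε
    obtain ⟨N, hN⟩ := hs (ε ^ 2 / (‖M 0‖ + 1)) (by positivity)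
    refine ⟨N, fun n hn => ?_⟩
    have h₁ := sq_norm_sub_apply_le_of_antitone hM hanti d hn
    have h₂ := hN n hn
    rw [Real.dist_eq, abs_sub_lt_iff] at h₂
    rw [dist_comm, dist_eq_norm, ← sq_lt_sq₀ (norm_nonneg _) hε.le]
    calc ‖M N d - M n d‖ ^ 2 ≤ ‖M 0‖ * (opSq (M N) d - opSq (M n) d) := h₁
      _ ≤ ‖M 0‖ * (ε ^ 2 / (‖M 0‖ + 1)) := by gcongr; linarith
      _ < ε ^ 2 := by
        rw [mul_div_assoc', div_lt_iff₀ (by positivity)]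
        nlinarith [norm_nonneg (M 0), sq_pos_of_pos hε]
  choose L hL using fun d => cauchySeq_tendsto_of_complete (hcauchy d)
  exact ⟨L, hL⟩

lemma tendsto_inner_apply_zero {T : ℕ → E →L[ℝ] E} {N : E →L[ℝ] E} (hT : ∀ k, IsSplusOp (T k))
    (hN : ∀ k, opLE N (T k)) {a b : ℕ → E} {B : ℝ}
    (ha : Tendsto (fun k => opSq (T k) (a k)) atTop (𝓝 0)) (hb : ∀ k, ‖b k‖ ≤ B) :
    Tendsto (fun k => ⟪T k (a k), b k⟫_ℝ) atTop (𝓝 0) := by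
  refine squeeze_zero_norm (fun k => ?_) (by simpa using ha.sqrt.mul_const √(‖N‖ * B ^ 2))
  rw [Real.norm_eq_abs]
  refine (hT k).abs_inner_le _ _ |>.trans (mul_le_mul_of_nonneg_left (Real.sqrt_le_sqrt ?_)
    (Real.sqrt_nonneg _))
  calc opSq (T k) (b k) ≤ opSq N (b k) := hN k (b k)
    _ ≤ ‖N‖ * ‖b k‖ ^ 2 := opSq_le_opNorm_mul_sq _ _
    _ ≤ ‖N‖ * B ^ 2 := by gcongr; exact hb k

end AntitoneFamily

lemma tendsto_inner_zero_of_tendsto_zero {E : Type*} [NormedAddCommGroup E] [InnerProductSpace ℝ E]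
    {a b : ℕ → E} {B : ℝ} (ha : Tendsto a atTop (𝓝 0)) (hb : ∀ k, ‖b k‖ ≤ B) :
    Tendsto (fun k => ⟪a k, b k⟫_ℝ) atTop (𝓝 0) :=
  ha.op_zero_isBoundedUnder_le (isBoundedUnder_of ⟨B, hb⟩) (fun u v => ⟪u, v⟫_ℝ)
    fun u v => by rw [Real.norm_eq_abs]; exact abs_real_inner_le_norm u v

lemma ne_top_of_forall_add_le {E : Type*} {f : E → EReal} {φ : E → ℝ} {x : E} (hf : ∃ u, f u ≠ ⊤)
    (hmin : ∀ u, f x + (φ x : EReal) ≤ f u + φ u) : f x ≠ ⊤ := by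
  obtain ⟨u, hu⟩ := hf
  intro htop
  have := hmin u
  rw [htop, EReal.top_add_coe, top_le_iff] at this
  exact (EReal.add_lt_top hu (EReal.coe_ne_top _)).ne this


section Subgradient

variable {E F : Type*} [NormedAddCommGroup E] [InnerProductSpace ℝ E]
  [NormedAddCommGroup F] [InnerProductSpace ℝ F]

def HasSubgradientAt (f : E → EReal) (d x : E) : Prop :=
  ∀ u, f x + ((⟪d, u - x⟫_ℝ : ℝ) : EReal) ≤ f u

namespace HasSubgradientAt

variable {f : E → EReal} {d x : E}

lemma le (h : HasSubgradientAt f d x) {u : E} {r s : ℝ} (hx : f x = r) (hu : f u = s) :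
    r + ⟪d, u - x⟫_ℝ ≤ s := by
  have := h u
  rw [hx, hu] at this
  exact_mod_cast this

lemma inner_sub_sub_nonneg (h : HasSubgradientAt f d x) {d' x' : E}
    (h' : HasSubgradientAt f d' x') {r r' : ℝ} (hx : f x = r) (hx' : f x' = r') :
    0 ≤ ⟪d - d', x - x'⟫_ℝ := by
  have h₁ := h.le hx hx'
  have h₂ := h'.le hx' hx
  have : ⟪d - d', x - x'⟫_ℝ = -(⟪d, x' - x⟫_ℝ + ⟪d', x - x'⟫_ℝ) := by
    simp only [inner_sub_left, inner_sub_right]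
    ring
  linarith

lemma sub_norm_mul_le (h : HasSubgradientAt f d x) {r : ℝ} (hx : f x = r) {u : E} {s B : ℝ}
    (hu : f u = s) (hb : ‖u‖ ≤ B) : r - ‖d‖ * (B + ‖x‖) ≤ s := by
  have h₁ := h.le hx hu
  have h₂ : ‖d‖ * ‖u - x‖ ≤ ‖d‖ * (B + ‖x‖) := by gcongr; exact (norm_sub_le _ _).trans (by gcongr)
  linarith [neg_le_of_abs_le ((abs_real_inner_le_norm d (u - x)).trans h₂)]

end HasSubgradientAt

lemma hasSubgradientAt_of_forall_add_le {f : E → EReal} (hf : ERealConvex f)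
    (hbot : ∀ u, f u ≠ ⊥) {φ : E → ℝ} {d x : E} {r : ℝ} (hx : f x = r)
    (hmin : ∀ u, f x + (φ x : EReal) ≤ f u + φ u)
    (hφ : ∀ v, ∃ C, ∀ t, φ (x + t • v) ≤ φ x + t * ⟪d, v⟫_ℝ + t ^ 2 * C) :
    HasSubgradientAt f (-d) x := by
  intro u
  rcases eq_or_ne (f u) ⊤ with hu | hu
  · rw [hu]
    exact le_top
  set s := (f u).toReal
  have hs : f u = s := (EReal.coe_toReal hu (hbot u)).symm
  obtain ⟨C, hC⟩ := hφ (u - x)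
  have key : ∀ t ∈ Set.Ioo (0 : ℝ) 1, r ≤ s + ⟪d, u - x⟫_ℝ + t * C := by
    rintro t ⟨ht₀, ht₁⟩
    have hconv : f (x + t • (u - x)) ≤ ((1 - t) * r + t * s : ℝ) := by
      have := hf x u (1 - t) t (by linarith) ht₀.le (by ring)
      rwa [hx, hs, ← EReal.coe_mul, ← EReal.coe_mul, ← EReal.coe_add,
        show (1 - t) • x + t • u = x + t • (u - x) by module] at this
    have hm := (hmin (x + t • (u - x))).trans (add_le_add_left hconv _)
    rw [hx, ← EReal.coe_add, ← EReal.coe_add, EReal.coe_le_coe_iff] at hm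
    have hφt := hC t
    refine le_of_mul_le_mul_left ?_ ht₀
    nlinarith
  have hlim : Tendsto (fun t => s + ⟪d, u - x⟫_ℝ + t * C) (𝓝[>] 0) (𝓝 (s + ⟪d, u - x⟫_ℝ)) := by
    have : Tendsto (fun t : ℝ => s + ⟪d, u - x⟫_ℝ + t * C) (𝓝 0) (𝓝 (s + ⟪d, u - x⟫_ℝ + 0 * C)) :=
      (continuous_const.add (continuous_id.mul continuous_const)).tendsto 0
    simpa using this.mono_left nhdsWithin_le_nhds
  have := ge_of_tendsto hlim (Filter.mem_of_superset (Ioo_mem_nhdsGT zero_lt_one) key)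
  rw [hx, hs, inner_neg_left, ← EReal.coe_add, EReal.coe_le_coe_iff]
  linarith

lemma hasSubgradientAt_of_isMin_quadratic [CompleteSpace E] [CompleteSpace F] {f : E → EReal}
    (hf : ERealConvex f) (hbot : ∀ u, f u ≠ ⊥) {B : E →L[ℝ] F} {M : E →L[ℝ] E} (hM : IsSplusOp M)
    {c : ℝ} {b : F} {s x : E} {r : ℝ} (hx : f x = r)
    (hmin : ∀ u, f x + (((c / 2) * ‖B x - b‖ ^ 2 + (1 / 2) * opSq M (x - s) : ℝ) : EReal) ≤
      f u + (((c / 2) * ‖B u - b‖ ^ 2 + (1 / 2) * opSq M (u - s) : ℝ) : EReal)) :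
    HasSubgradientAt f (-(c • ContinuousLinearMap.adjoint B (B x - b) + M (x - s))) x := by
  refine hasSubgradientAt_of_forall_add_le hf hbot hx
    (φ := fun u => (c / 2) * ‖B u - b‖ ^ 2 + (1 / 2) * opSq M (u - s)) hmin fun v =>
    ⟨(c / 2) * ‖B v‖ ^ 2 + (1 / 2) * opSq M v, fun t => le_of_eq ?_⟩
  have h₁ : B (x + t • v) - b = (B x - b) + t • B v := by rw [map_add, map_smul]; abel
  have h₂ : x + t • v - s = (x - s) + t • v := by abel
  rw [h₁, h₂, norm_add_sq_real, hM.opSq_add, norm_smul, opSq_smul, inner_add_left,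
    real_inner_smul_left, ContinuousLinearMap.adjoint_inner_left, real_inner_smul_right,
    real_inner_smul_right, mul_pow, Real.norm_eq_abs, sq_abs]
  ring

lemma IsXUpdate.hasSubgradientAt [CompleteSpace E] [CompleteSpace F] {f : E → EReal}
    (hf : ERealConvex f) (hbot : ∀ u, f u ≠ ⊥) {A : E →L[ℝ] F} {c : ℝ} (hc : c ≠ 0)
    {M : E →L[ℝ] E} (hM : IsSplusOp M) {x₀ x₁ : E} {z₀ z₁ y₀ y₁ : F} {r : ℝ} (hx₁ : f x₁ = r)
    (h : IsXUpdate f A c M x₀ z₀ y₀ x₁) (hy : y₁ = y₀ + c • (A x₁ - z₁)) :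
    HasSubgradientAt f
      (-(ContinuousLinearMap.adjoint A (y₁ + c • (z₁ - z₀)) + M (x₁ - x₀))) x₁ := by
  have hb : ∀ u, A u - z₀ + c⁻¹ • y₀ = A u - (z₀ - c⁻¹ • y₀) := fun u => by abel
  have := hasSubgradientAt_of_isMin_quadratic hf hbot hM hx₁ fun u => by
    simpa only [hb] using h u
  convert this using 4
  rw [← map_smul, hy]
  congr 1
  simp only [smul_sub, smul_inv_smul₀ hc]
  abel

lemma IsZUpdate.hasSubgradientAt [CompleteSpace F] {g : F → EReal} (hg : ERealConvex g)
    (hbot : ∀ w, g w ≠ ⊥) {c : ℝ} (hc : c ≠ 0) {M : F →L[ℝ] F} (hM : IsSplusOp M)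
    {a z₀ z₁ y₀ y₁ : F} {r : ℝ} (hz₁ : g z₁ = r) (h : IsZUpdate g c M a z₀ y₀ z₁)
    (hy : y₁ = y₀ + c • (a - z₁)) :
    HasSubgradientAt g (y₁ - M (z₁ - z₀)) z₁ := by
  have hb : ∀ w, ‖a - w + c⁻¹ • y₀‖ = ‖ContinuousLinearMap.id ℝ F w - (a + c⁻¹ • y₀)‖ :=
    fun w => by rw [← norm_neg]; congr 1; simp only [ContinuousLinearMap.id_apply]; abel
  have := hasSubgradientAt_of_isMin_quadratic hg hbot hM hz₁ fun w => by
    simpa only [hb] using h w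
  convert this using 1
  rw [ContinuousLinearMap.adjoint_id, ContinuousLinearMap.id_apply, ContinuousLinearMap.id_apply,
    hy]
  simp only [smul_sub, smul_add, smul_inv_smul₀ hc]
  abel

end Subgradient

section SaddlePoint

variable {E F : Type*} [NormedAddCommGroup E] [InnerProductSpace ℝ E]
  [NormedAddCommGroup F] [InnerProductSpace ℝ F]
  {f : E → EReal} {g : F → EReal} {A : E →L[ℝ] F} {p : E} {q v : F}

lemma lagr_coe {rp rq : ℝ} (hp : f p = rp) (hq : g q = rq) :
    Lagr f g A p q v = ((rp + rq + ⟪v, A p - q⟫_ℝ : ℝ) : EReal) := by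
  rw [Lagr, hp, hq, ← EReal.coe_add, ← EReal.coe_add]

lemma isSaddle_lagr_of_forall_le (hpq : A p = q) (h : ∀ u w, Lagr f g A p q v ≤ Lagr f g A u w v) :
    IsSaddle (Lagr f g A) p q v :=
  fun u w v' => ⟨by simp only [Lagr, hpq, sub_self, inner_zero_right, le_refl], h u w⟩

namespace IsSaddle

variable (hf : ERealProper f) (hg : ERealProper g) (h : IsSaddle (Lagr f g A) p q v)
include hf hg h

lemma exists_coe : ∃ rp rq : ℝ, f p = rp ∧ g q = rq := by
  obtain ⟨p₀, hp₀⟩ := hf.2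
  obtain ⟨q₀, hq₀⟩ := hg.2
  have hlt : Lagr f g A p q v < ⊤ := by
    refine (h p₀ q₀ v).2.trans_lt ?_
    rw [lagr_coe (EReal.coe_toReal hp₀ (hf.1 p₀)).symm (EReal.coe_toReal hq₀ (hg.1 q₀)).symm]
    exact EReal.coe_lt_top _
  have hp : f p ≠ ⊤ := fun htop => by
    rw [Lagr, htop, EReal.top_add_of_ne_bot (hg.1 q), EReal.top_add_of_ne_bot (EReal.coe_ne_bot _)]
      at hlt
    exact lt_irrefl _ hlt
  have hq : g q ≠ ⊤ := fun htop => by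
    rw [Lagr, htop, EReal.add_top_of_ne_bot (hf.1 p), EReal.top_add_of_ne_bot (EReal.coe_ne_bot _)]
      at hlt
    exact lt_irrefl _ hlt
  exact ⟨_, _, (EReal.coe_toReal hp (hf.1 p)).symm, (EReal.coe_toReal hq (hg.1 q)).symm⟩

lemma apply_eq : A p = q := by
  obtain ⟨rp, rq, hp, hq⟩ := h.exists_coe hf hg
  have h₁ := (h p q (v + (A p - q))).1
  rw [lagr_coe hp hq, lagr_coe hp hq, EReal.coe_le_coe_iff, inner_add_left,
    real_inner_self_eq_norm_sq] at h₁
  rw [← sub_eq_zero, ← norm_eq_zero]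
  nlinarith [norm_nonneg (A p - q)]

lemma hasSubgradientAt_left [CompleteSpace E] [CompleteSpace F] :
    HasSubgradientAt f (-(ContinuousLinearMap.adjoint A v)) p := by
  obtain ⟨rp, rq, hp, hq⟩ := h.exists_coe hf hg
  intro u
  rcases eq_or_ne (f u) ⊤ with hu | hu
  · rw [hu]
    exact le_top
  have hu' := (EReal.coe_toReal hu (hf.1 u)).symm
  have h₁ := (h u q v).2
  rw [lagr_coe hp hq, lagr_coe hu' hq, EReal.coe_le_coe_iff, ← h.apply_eq hf hg] at h₁
  rw [hp, hu', ← EReal.coe_add, EReal.coe_le_coe_iff, inner_neg_left,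
    ContinuousLinearMap.adjoint_inner_left, map_sub]
  simp only [sub_self, inner_zero_right, inner_sub_right] at h₁ ⊢
  linarith

lemma hasSubgradientAt_right : HasSubgradientAt g v q := by
  obtain ⟨rp, rq, hp, hq⟩ := h.exists_coe hf hg
  intro w
  rcases eq_or_ne (g w) ⊤ with hw | hw
  · rw [hw]
    exact le_top
  have hw' := (EReal.coe_toReal hw (hg.1 w)).symm
  have h₁ := (h p w v).2
  rw [lagr_coe hp hq, lagr_coe hp hw', EReal.coe_le_coe_iff, h.apply_eq hf hg] at h₁
  rw [hq, hw', ← EReal.coe_add, EReal.coe_le_coe_iff]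
  simp only [sub_self, inner_zero_right, inner_sub_right] at h₁ ⊢
  linarith

end IsSaddle

end SaddlePoint

section WeakConvergence

variable {E F : Type*} [NormedAddCommGroup E] [InnerProductSpace ℝ E]
  [NormedAddCommGroup F] [InnerProductSpace ℝ F] {u : ℕ → E} {p : E}

namespace WeakConv

lemma comp (hu : WeakConv u p) {φ : ℕ → ℕ} (hφ : Tendsto φ atTop atTop) :
    WeakConv (fun j => u (φ j)) p :=
  fun w => (hu w).comp hφ

lemma sub (hu : WeakConv u p) {v : ℕ → E} {q : E} (hv : WeakConv v q) :
    WeakConv (fun n => u n - v n) (p - q) :=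
  fun w => by simpa only [inner_sub_left] using (hu w).sub (hv w)

lemma map [CompleteSpace E] [CompleteSpace F] (hu : WeakConv u p) (A : E →L[ℝ] F) :
    WeakConv (fun n => A (u n)) (A p) := by
  intro w
  simpa only [ContinuousLinearMap.adjoint_inner_right] using hu (ContinuousLinearMap.adjoint A w)

lemma eq_of_tendsto (hu : WeakConv u p) {q : E} (hq : Tendsto u atTop (𝓝 q)) : p = q :=
  ext_inner_right ℝ fun w => tendsto_nhds_unique (hu w) (hq.inner tendsto_const_nhds)

lemma tendsto_inner (hu : WeakConv u p) {B : ℝ} (hb : ∀ n, ‖u n‖ ≤ B) {v : ℕ → E} {v₀ : E}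
    (hv : Tendsto v atTop (𝓝 v₀)) : Tendsto (fun n => ⟪u n, v n⟫_ℝ) atTop (𝓝 ⟪p, v₀⟫_ℝ) := by
  have h₀ := tendsto_inner_zero_of_tendsto_zero (tendsto_sub_nhds_zero_iff.2 hv) hb
  have := h₀.add (hu v₀)
  rw [zero_add] at this
  refine this.congr fun n => ?_
  rw [real_inner_comm, inner_sub_right]
  ring

lemma mem_of_convex_of_isClosed [CompleteSpace E] (hu : WeakConv u p) {C : Set E}
    (hC : Convex ℝ C) (hCc : IsClosed C) (hev : ∀ᶠ n in atTop, u n ∈ C) : p ∈ C := by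
  by_contra hp
  obtain ⟨φ, s, hφC, hφp⟩ := geometric_hahn_banach_closed_point hC hCc hp
  set w := (InnerProductSpace.toDual ℝ E).symm φ
  have hw : ∀ a, φ a = ⟪a, w⟫_ℝ := fun a => by
    rw [real_inner_comm, ← InnerProductSpace.toDual_apply_apply,
      LinearIsometryEquiv.apply_symm_apply]
  have hlim : Tendsto (fun n => φ (u n)) atTop (𝓝 (φ p)) := by simpa only [hw] using hu w
  have := le_of_tendsto hlim (hev.mono fun n hn => (hφC _ hn).le)
  linarith

end WeakConv

lemma ERealConvex.le_of_weakConv [CompleteSpace E] {f : E → EReal} (hf : ERealConvex f)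
    (hfl : LowerSemicontinuous f) (hu : WeakConv u p) {r : ℕ → ℝ} {ρ : ℝ}
    (hr : Tendsto r atTop (𝓝 ρ)) (hle : ∀ n, f (u n) ≤ r n) : f p ≤ ρ := by
  refine EReal.le_of_forall_lt_iff_le.1 fun ρ' hρ' => ?_
  have hconv : Convex ℝ (f ⁻¹' Set.Iic (ρ' : EReal)) := by
    intro a ha b hb s t hs ht hst
    simp only [Set.mem_preimage, Set.mem_Iic] at ha hb ⊢
    calc f (s • a + t • b) ≤ s * f a + t * f b := hf a b s t hs ht hst
      _ ≤ s * ρ' + t * ρ' := add_le_add (mul_le_mul_of_nonneg_left ha (by exact_mod_cast hs))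
          (mul_le_mul_of_nonneg_left hb (by exact_mod_cast ht))
      _ = ρ' := by rw [← EReal.coe_mul, ← EReal.coe_mul, ← EReal.coe_add, ← add_mul, hst, one_mul]
  refine hu.mem_of_convex_of_isClosed hconv (hfl.isClosed_preimage _)
    ((hr.eventually (gt_mem_nhds (EReal.coe_lt_coe_iff.1 hρ'))).mono fun n hn => ?_)
  exact (hle n).trans (EReal.coe_le_coe_iff.2 hn.le)

lemma exists_weakConv_subseq [CompleteSpace E] {B : ℝ} (hb : ∀ n, ‖u n‖ ≤ B) :
    ∃ p φ, StrictMono φ ∧ WeakConv (fun j => u (φ j)) p := by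
  -- Sequential Banach-Alaoglu in the separable closed span `K` of the sequence; vectors outside
  -- `K` are reduced to `K` by the orthogonal projection.
  set K := (Submodule.span ℝ (Set.range u)).topologicalClosure
  have huK : ∀ n, u n ∈ K :=
    fun n => Submodule.le_topologicalClosure _ (Submodule.subset_span ⟨n, rfl⟩)
  have : CompleteSpace K := (Submodule.isClosed_topologicalClosure _).completeSpace_coe
  have : TopologicalSpace.SeparableSpace K := by
    have : TopologicalSpace.IsSeparable (K : Set E) := by
      rw [Submodule.topologicalClosure_coe]
      exact (Set.countable_range u).isSeparable.span.closure
    exact this.separableSpace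
  set ψ : ℕ → WeakDual ℝ K :=
    fun n => StrongDual.toWeakDual (InnerProductSpace.toDual ℝ K ⟨u n, huK n⟩)
  have hψ : ∀ n, ψ n ∈ WeakDual.toStrongDual ⁻¹' Metric.closedBall (0 : StrongDual ℝ K) B :=
    fun n => by
    rw [Set.mem_preimage, StrongDual.toStrongDual_toWeakDual]
    exact mem_closedBall_zero_iff.2 (((InnerProductSpace.toDual ℝ K).norm_map _).trans_le (hb n))
  obtain ⟨ψ₀, -, φ, hφ, hlim⟩ := WeakDual.isSeqCompact_closedBall ℝ K 0 B hψ
  refine ⟨((InnerProductSpace.toDual ℝ K).symm (WeakDual.toStrongDual ψ₀) : E), φ, hφ, fun w => ?_⟩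
  have hev := ((WeakDual.eval_continuous (K.orthogonalProjectionOnto w)).tendsto ψ₀).comp hlim
  convert hev using 1
  · ext j
    show ⟪u (φ j), w⟫_ℝ =
      InnerProductSpace.toDual ℝ K ⟨u (φ j), huK _⟩ (K.orthogonalProjectionOnto w)
    rw [InnerProductSpace.toDual_apply_apply,
      Submodule.inner_orthogonalProjectionOnto_eq_of_mem_left]
  · rw [← Submodule.inner_orthogonalProjectionOnto_eq_of_mem_left,
      ← InnerProductSpace.toDual_apply_apply, LinearIsometryEquiv.apply_symm_apply]
    rfl

lemma WeakConv.of_succ (hu : WeakConv (fun n => u (n + 1)) p) : WeakConv u p :=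
  fun w => (tendsto_add_atTop_iff_nat 1).1 (hu w)

lemma weakConv_of_forall_subseq
    (hu : ∀ ns : ℕ → ℕ, Tendsto ns atTop atTop →
      ∃ ms : ℕ → ℕ, WeakConv (fun j => u (ns (ms j))) p) :
    WeakConv u p :=
  fun w => tendsto_of_subseq_tendsto fun ns hns => (hu ns hns).imp fun _ hms => hms w

lemma WeakConv.tendsto_opSq_sub_sub_opSq_sub (hu : WeakConv u p) {B : ℝ} (hb : ∀ n, ‖u n‖ ≤ B)
    {U : ℕ → E →L[ℝ] E} (hU : ∀ n, IsSplusOp (U n)) {L : E → E}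
    (hL : ∀ d, Tendsto (fun n => U n d) atTop (𝓝 (L d))) (p₁ p₂ : E) :
    Tendsto (fun n => opSq (U n) (u n - p₁) - opSq (U n) (u n - p₂)) atTop
      (𝓝 (⟪p₁, L p₁⟫_ℝ - ⟪p₂, L p₂⟫_ℝ - 2 * ⟪p, L (p₁ - p₂)⟫_ℝ)) := by
  have hq : ∀ d, Tendsto (fun n => opSq (U n) d) atTop (𝓝 ⟪d, L d⟫_ℝ) :=
    fun d => tendsto_const_nhds.inner (hL d)
  refine (((hq p₁).sub (hq p₂)).sub ((hu.tendsto_inner hb (hL (p₁ - p₂))).const_mul 2)).congr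
    fun n => ?_
  rw [(hU n).opSq_sub, (hU n).opSq_sub, (hU n).1, (hU n).1, map_sub, inner_sub_right]
  ring

lemma WeakConv.tendsto_norm_sub_sq_sub_norm_sub_sq (hu : WeakConv u p) (p₁ p₂ : E) :
    Tendsto (fun n => ‖u n - p₁‖ ^ 2 - ‖u n - p₂‖ ^ 2) atTop
      (𝓝 (‖p₁‖ ^ 2 - ‖p₂‖ ^ 2 - 2 * ⟪p, p₁ - p₂⟫_ℝ)) := by
  refine ((tendsto_const_nhds (x := ‖p₁‖ ^ 2 - ‖p₂‖ ^ 2)).sub ((hu (p₁ - p₂)).const_mul 2)).congr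
    fun n => ?_
  rw [norm_sub_sq_real, norm_sub_sq_real, inner_sub_right]
  ring

lemma add_le_of_weakConv [CompleteSpace E] [CompleteSpace F] {f : E → EReal} {g : F → EReal}
    (hf : ERealConvex f) (hfl : LowerSemicontinuous f) (hg : ERealConvex g)
    (hgl : LowerSemicontinuous g) (hu : WeakConv u p) {w : ℕ → F} {q : F} (hw : WeakConv w q)
    {a b r : ℕ → ℝ} {lo hi R : ℝ} (ha : ∀ n, f (u n) = a n) (hb : ∀ n, g (w n) = b n)
    (haI : ∀ n, a n ∈ Set.Icc lo hi) (hab : ∀ n, a n + b n ≤ r n) (hr : Tendsto r atTop (𝓝 R)) :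
    f p + g q ≤ R := by
  obtain ⟨ρ, -, ψ, hψ, hρ⟩ := tendsto_subseq_of_bounded (Metric.isBounded_Icc lo hi) haI
  have hψ' := hψ.tendsto_atTop
  have h₁ : f p ≤ ρ := hf.le_of_weakConv hfl (hu.comp hψ') hρ fun n => (ha _).le
  have h₂ : g q ≤ ↑(R - ρ) := hg.le_of_weakConv hgl (hw.comp hψ') ((hr.comp hψ').sub hρ)
    fun n => by
      rw [hb]
      exact EReal.coe_le_coe_iff.2 (by simp only [Function.comp_apply]; linarith [hab (ψ n)])
  calc f p + g q ≤ ρ + ↑(R - ρ) := add_le_add h₁ h₂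
    _ = R := by rw [← EReal.coe_add, add_sub_cancel]

end WeakConvergence

lemma two_mul_inner_sub_eq_norm_sq {E : Type*} [NormedAddCommGroup E] [InnerProductSpace ℝ E]
    (a b : E) : 2 * ⟪a - b, a⟫_ℝ = ‖a‖ ^ 2 - ‖b‖ ^ 2 + ‖a - b‖ ^ 2 := by
  rw [norm_sub_sq_real, inner_sub_left, real_inner_self_eq_norm_sq, real_inner_comm]
  ring

section Bounds

variable {E : Type*} [NormedAddCommGroup E]

lemma tendsto_zero_of_mul_sq_norm_le {u : ℕ → E} {r : ℕ → ℝ} {a : ℝ} (ha : 0 < a)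
    (hr : Tendsto r atTop (𝓝 0)) (hle : ∀ n, a * ‖u n‖ ^ 2 ≤ r n) : Tendsto u atTop (𝓝 0) := by
  rw [tendsto_zero_iff_norm_tendsto_zero]
  refine squeeze_zero (fun n => norm_nonneg _) (fun n => ?_) (by simpa using (hr.div_const a).sqrt)
  refine Real.le_sqrt_of_sq_le ?_
  rw [le_div_iff₀ ha, mul_comm]
  exact hle n

lemma exists_forall_norm_le_of_mul_sq_le {u : ℕ → E} {p : E} {a C : ℝ} (ha : 0 < a)
    (hle : ∀ n, a * ‖u (n + 1) - p‖ ^ 2 ≤ C) : ∃ B, ∀ n, ‖u n‖ ≤ B := by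
  refine ⟨max ‖u 0‖ (√(C / a) + ‖p‖), fun n => ?_⟩
  cases n with
  | zero => exact le_max_left _ _
  | succ n =>
    refine le_max_of_le_right ((norm_le_norm_sub_add _ p).trans (add_le_add_left ?_ _))
    refine Real.le_sqrt_of_sq_le ?_
    rw [le_div_iff₀ ha, mul_comm]
    exact hle n

end Bounds

lemma IsPalphaOp.norm_le {E F : Type*} [NormedAddCommGroup E] [InnerProductSpace ℝ E]
    [CompleteSpace E] [NormedAddCommGroup F] [InnerProductSpace ℝ F] [CompleteSpace F]
    {A : E →L[ℝ] F} {α : ℝ} (hα : 0 < α)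
    (hA : IsPalphaOp α ((ContinuousLinearMap.adjoint A).comp A)) (v : E) :
    ‖v‖ ≤ ‖A v‖ / √α := by
  have h := hA.2 v
  rw [ContinuousLinearMap.comp_apply, ContinuousLinearMap.adjoint_inner_right,
    real_inner_self_eq_norm_sq] at h
  rw [le_div_iff₀ (Real.sqrt_pos.2 hα)]
  calc ‖v‖ * √α = √(α * ‖v‖ ^ 2) := by
        rw [Real.sqrt_mul hα.le, Real.sqrt_sq (norm_nonneg _), mul_comm]
    _ ≤ √(‖A v‖ ^ 2) := Real.sqrt_le_sqrt h
    _ = ‖A v‖ := Real.sqrt_sq (norm_nonneg _)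

section VariableMetricADMM

variable {H G : Type*} [NormedAddCommGroup H] [InnerProductSpace ℝ H] [CompleteSpace H]
  [NormedAddCommGroup G] [InnerProductSpace ℝ G] [CompleteSpace G]

/-- The variable-metric ADMM iteration in first-order form, with the standing assumptions on the
step `c` and on the metrics. -/
structure IsVMADMMSeq (f : H → EReal) (g : G → EReal) (A : H →L[ℝ] G) (c : ℝ)
    (M₁ : ℕ → H →L[ℝ] H) (M₂ : ℕ → G →L[ℝ] G) (x : ℕ → H) (z y : ℕ → G) : Prop where
  c_pos : 0 < c
  splus₁ : ∀ k, IsSplusOp (M₁ k)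
  splus₂ : ∀ k, IsSplusOp (M₂ k)
  antitone₁ : ∀ k, opLE (M₁ k) (M₁ (k + 1))
  antitone₂ : ∀ k, opLE (M₂ k) (M₂ (k + 1))
  le_two_smul₂ : ∀ k, opLE ((2 : ℝ) • M₂ (k + 1)) (M₂ k)
  f_proper : ERealProper f
  g_proper : ERealProper g
  f_ne_top : ∀ k, f (x (k + 1)) ≠ ⊤
  g_ne_top : ∀ k, g (z (k + 1)) ≠ ⊤
  subgrad_f : ∀ k, HasSubgradientAt f
    (-(ContinuousLinearMap.adjoint A (y (k + 1) + c • (z (k + 1) - z k)) + M₁ k (x (k + 1) - x k)))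
    (x (k + 1))
  subgrad_g : ∀ k, HasSubgradientAt g (y (k + 1) - M₂ k (z (k + 1) - z k)) (z (k + 1))
  y_succ : ∀ k, y (k + 1) = y k + c • (A (x (k + 1)) - z (k + 1))

variable {f : H → EReal} {g : G → EReal} {A : H →L[ℝ] G} {c : ℝ}
  {M₁ : ℕ → H →L[ℝ] H} {M₂ : ℕ → G →L[ℝ] G} {x : ℕ → H} {z y : ℕ → G}

lemma IsVMADMMSeq.of_updates (hfp : ERealProper f) (hfc : ERealConvex f) (hgp : ERealProper g)
    (hgc : ERealConvex g) (hc : 0 < c) (hM₁ : ∀ k, IsSplusOp (M₁ k))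
    (hM₂ : ∀ k, IsSplusOp (M₂ k)) (hM₁mono : ∀ k, opLE (M₁ k) (M₁ (k + 1)))
    (hM₂chain : ∀ k, opLE ((2 : ℝ) • M₂ (k + 1)) (M₂ k) ∧ opLE (M₂ k) (M₂ (k + 1)))
    (hx : ∀ k, IsXUpdate f A c (M₁ k) (x k) (z k) (y k) (x (k + 1)))
    (hz : ∀ k, IsZUpdate g c (M₂ k) (A (x (k + 1))) (z k) (y k) (z (k + 1)))
    (hy : ∀ k, y (k + 1) = y k + c • (A (x (k + 1)) - z (k + 1))) :
    IsVMADMMSeq f g A c M₁ M₂ x z y := by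
  have hfx : ∀ k, f (x (k + 1)) ≠ ⊤ := fun k => ne_top_of_forall_add_le hfp.2
    (φ := fun u => (c / 2) * ‖A u - z k + c⁻¹ • y k‖ ^ 2 + (1 / 2) * opSq (M₁ k) (u - x k)) (hx k)
  have hgz : ∀ k, g (z (k + 1)) ≠ ⊤ := fun k => ne_top_of_forall_add_le hgp.2
    (φ := fun w => (c / 2) * ‖A (x (k + 1)) - w + c⁻¹ • y k‖ ^ 2 + (1 / 2) * opSq (M₂ k) (w - z k))
    (hz k)
  exact
    { c_pos := hc, splus₁ := hM₁, splus₂ := hM₂, antitone₁ := hM₁mono,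
      antitone₂ := fun k => (hM₂chain k).2, le_two_smul₂ := fun k => (hM₂chain k).1,
      f_proper := hfp, g_proper := hgp, f_ne_top := hfx, g_ne_top := hgz, y_succ := hy,
      subgrad_f := fun k => (hx k).hasSubgradientAt hfc hfp.1 hc.ne' (hM₁ k)
        (EReal.coe_toReal (hfx k) (hfp.1 _)).symm (hy k)
      subgrad_g := fun k => (hz k).hasSubgradientAt hgc hgp.1 hc.ne' (hM₂ k)
        (EReal.coe_toReal (hgz k) (hgp.1 _)).symm (hy k) }

/-- The Fejér functional of the iterates with respect to `(p, q, v)`; its last term absorbs the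
cross term of `neg_two_mul_inner_le`. -/
def admmLyapunov (c : ℝ) (M₁ : ℕ → H →L[ℝ] H) (M₂ : ℕ → G →L[ℝ] G) (x : ℕ → H) (z y : ℕ → G)
    (p : H) (q v : G) (k : ℕ) : ℝ :=
  opSq (M₁ (k + 1)) (x (k + 1) - p) + opSq (M₂ (k + 1)) (z (k + 1) - q) + c * ‖z (k + 1) - q‖ ^ 2
    + c⁻¹ * ‖y (k + 1) - v‖ ^ 2 + opSq (M₂ k) (z (k + 1) - z k)

def admmResidual (c : ℝ) (M₁ : ℕ → H →L[ℝ] H) (x : ℕ → H) (z y : ℕ → G) (k : ℕ) : ℝ :=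
  opSq (M₁ k) (x (k + 1) - x k) + c * ‖z (k + 1) - z k‖ ^ 2 + c⁻¹ * ‖y (k + 1) - y k‖ ^ 2

def admmError (c : ℝ) (A : H →L[ℝ] G) (M₁ : ℕ → H →L[ℝ] H) (M₂ : ℕ → G →L[ℝ] G) (x : ℕ → H)
    (z y : ℕ → G) (u : H) (w : G) (k : ℕ) : ℝ :=
  -(c⁻¹ * ⟪y (k + 1), y (k + 1) - y k⟫_ℝ) + c * ⟪z (k + 1) - z k, A (u - x (k + 1))⟫_ℝ
    + ⟪M₁ k (x (k + 1) - x k), u - x (k + 1)⟫_ℝ + ⟪M₂ k (z (k + 1) - z k), w - z (k + 1)⟫_ℝ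

/-- `(p, q, v)` is the weak limit of `(x, z, y)` along `φ`, shifted by one since the first-order
conditions only hold from the first iterate on. -/
def WeakConvAlong (φ : ℕ → ℕ) (x : ℕ → H) (z y : ℕ → G) (p : H) (q v : G) : Prop :=
  Tendsto φ atTop atTop ∧ WeakConv (fun j => x (φ j + 1)) p ∧ WeakConv (fun j => z (φ j + 1)) q ∧
    WeakConv (fun j => y (φ j + 1)) v

namespace IsVMADMMSeq

variable (h : IsVMADMMSeq f g A c M₁ M₂ x z y)
include h

lemma f_eq (k : ℕ) : f (x (k + 1)) = ((f (x (k + 1))).toReal : EReal) :=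
  (EReal.coe_toReal (h.f_ne_top k) (h.f_proper.1 _)).symm

lemma g_eq (k : ℕ) : g (z (k + 1)) = ((g (z (k + 1))).toReal : EReal) :=
  (EReal.coe_toReal (h.g_ne_top k) (h.g_proper.1 _)).symm

lemma apply_sub_eq_inv_smul (k : ℕ) : A (x (k + 1)) - z (k + 1) = c⁻¹ • (y (k + 1) - y k) := by
  rw [h.y_succ k, add_sub_cancel_left, inv_smul_smul₀ h.c_pos.ne']

lemma inner_le_zero_of_isSaddle {p : H} {q v : G} (hs : IsSaddle (Lagr f g A) p q v) (k : ℕ) :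
    c⁻¹ * ⟪y (k + 1) - y k, y (k + 1) - v⟫_ℝ + c * ⟪z (k + 1) - z k, z (k + 1) - q⟫_ℝ
      + ⟪z (k + 1) - z k, y (k + 1) - y k⟫_ℝ + ⟪M₁ k (x (k + 1) - x k), x (k + 1) - p⟫_ℝ
      + ⟪M₂ k (z (k + 1) - z k), z (k + 1) - q⟫_ℝ ≤ 0 := by
  obtain ⟨rp, rq, hp, hq⟩ := hs.exists_coe h.f_proper h.g_proper
  have h₁ := (h.subgrad_f k).inner_sub_sub_nonneg
    (hs.hasSubgradientAt_left h.f_proper h.g_proper) (h.f_eq k) hp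
  have h₂ := (h.subgrad_g k).inner_sub_sub_nonneg
    (hs.hasSubgradientAt_right h.f_proper h.g_proper) (h.g_eq k) hq
  have hAx : A (x (k + 1)) - A p = c⁻¹ • (y (k + 1) - y k) + (z (k + 1) - q) := by
    rw [hs.apply_eq h.f_proper h.g_proper, ← h.apply_sub_eq_inv_smul k]
    abel
  rw [show ∀ (a b : G) (n : H), -(ContinuousLinearMap.adjoint A a + n) -
      -(ContinuousLinearMap.adjoint A b) = -(ContinuousLinearMap.adjoint A (a - b) + n) by
        intros; rw [map_sub]; abel,
    inner_neg_left, inner_add_left, ContinuousLinearMap.adjoint_inner_left, map_sub, hAx,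
    show y (k + 1) + c • (z (k + 1) - z k) - v = (y (k + 1) - v) + c • (z (k + 1) - z k) by abel]
    at h₁
  rw [show y (k + 1) - M₂ k (z (k + 1) - z k) - v =
      (y (k + 1) - v) - M₂ k (z (k + 1) - z k) by abel, inner_sub_left] at h₂
  simp only [inner_add_left, inner_add_right, real_inner_smul_left, real_inner_smul_right,
    ← mul_assoc, inv_mul_cancel₀ h.c_pos.ne', one_mul] at h₁
  rw [real_inner_comm (y (k + 1) - v)]
  linarith

lemma neg_two_mul_inner_le (k : ℕ) :
    -(2 * ⟪z (k + 1 + 1) - z (k + 1), y (k + 1 + 1) - y (k + 1)⟫_ℝ) ≤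
      opSq (M₂ k) (z (k + 1) - z k) := by
  have hmono := (h.subgrad_g (k + 1)).inner_sub_sub_nonneg (h.subgrad_g k) (h.g_eq (k + 1))
    (h.g_eq k)
  rw [show ∀ a b c d : G, a - c - (b - d) = (a - b) - c + d by intros; abel, inner_add_left,
    inner_sub_left, real_inner_comm (z (k + 1 + 1) - z (k + 1))] at hmono
  have hcs := (h.splus₂ k).two_mul_inner_le (z (k + 1) - z k) (z (k + 1 + 1) - z (k + 1))
  have hle := h.le_two_smul₂ k (z (k + 1 + 1) - z (k + 1))
  rw [smul_apply, real_inner_smul_right] at hle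
  have e : ⟪M₂ (k + 1) (z (k + 1 + 1) - z (k + 1)), z (k + 1 + 1) - z (k + 1)⟫_ℝ =
      opSq (M₂ (k + 1)) (z (k + 1 + 1) - z (k + 1)) := real_inner_comm _ _
  simp only [opSq] at hcs e ⊢
  linarith

lemma toReal_add_toReal_le (k : ℕ) {u : H} {w : G} {ru rw : ℝ} (hu : f u = ru) (hw : g w = rw) :
    (f (x (k + 1))).toReal + (g (z (k + 1))).toReal ≤
      ru + rw + ⟪y (k + 1), A u - w⟫_ℝ + admmError c A M₁ M₂ x z y u w k := by
  have h₁ := (h.subgrad_f k).le (h.f_eq k) hu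
  have h₂ := (h.subgrad_g k).le (h.g_eq k) hw
  have e : ⟪y (k + 1), A (u - x (k + 1))⟫_ℝ - ⟪y (k + 1), w - z (k + 1)⟫_ℝ =
      ⟪y (k + 1), A u - w⟫_ℝ - c⁻¹ * ⟪y (k + 1), y (k + 1) - y k⟫_ℝ := by
    rw [← inner_sub_right, ← real_inner_smul_right, ← inner_sub_right,
      ← h.apply_sub_eq_inv_smul k, map_sub]
    congr 1
    abel
  rw [inner_neg_left, inner_add_left, ContinuousLinearMap.adjoint_inner_left, inner_add_left,
    real_inner_smul_left] at h₁
  rw [inner_sub_left] at h₂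
  unfold admmError
  linarith

lemma admmResidual_nonneg (k : ℕ) : 0 ≤ admmResidual c M₁ x z y k := by
  have := (h.splus₁ k).opSq_nonneg (x (k + 1) - x k)
  have := h.c_pos
  unfold admmResidual
  positivity

lemma admmLyapunov_nonneg (p : H) (q v : G) (k : ℕ) : 0 ≤ admmLyapunov c M₁ M₂ x z y p q v k := by
  have := (h.splus₁ (k + 1)).opSq_nonneg (x (k + 1) - p)
  have := (h.splus₂ (k + 1)).opSq_nonneg (z (k + 1) - q)
  have := (h.splus₂ k).opSq_nonneg (z (k + 1) - z k)
  have := h.c_pos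
  unfold admmLyapunov
  positivity

lemma admmLyapunov_succ_add_admmResidual_le {p : H} {q v : G} (hs : IsSaddle (Lagr f g A) p q v)
    (k : ℕ) :
    admmLyapunov c M₁ M₂ x z y p q v (k + 1) + admmResidual c M₁ x z y (k + 1) ≤
      admmLyapunov c M₁ M₂ x z y p q v k := by
  have hmain := h.inner_le_zero_of_isSaddle hs (k + 1)
  have hcross := h.neg_two_mul_inner_le k
  have t₁ := (h.splus₁ (k + 1)).two_mul_inner_sub_eq (x (k + 1 + 1) - p) (x (k + 1) - p)
  have t₂ := (h.splus₂ (k + 1)).two_mul_inner_sub_eq (z (k + 1 + 1) - q) (z (k + 1) - q)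
  have t₃ := congrArg (c * ·) (two_mul_inner_sub_eq_norm_sq (z (k + 1 + 1) - q) (z (k + 1) - q))
  have t₄ := congrArg (c⁻¹ * ·) (two_mul_inner_sub_eq_norm_sq (y (k + 1 + 1) - v) (y (k + 1) - v))
  simp only [sub_sub_sub_cancel_right] at t₁ t₂ t₃ t₄
  have m₁ := h.antitone₁ (k + 1) (x (k + 1 + 1) - p)
  have m₂ := h.antitone₂ (k + 1) (z (k + 1 + 1) - q)
  unfold admmLyapunov admmResidual
  simp only [opSq] at *
  linarith

end IsVMADMMSeq

end VariableMetricADMM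

namespace IsVMADMMSeq

variable {H G : Type*} [NormedAddCommGroup H] [InnerProductSpace ℝ H] [CompleteSpace H]
  [NormedAddCommGroup G] [InnerProductSpace ℝ G] [CompleteSpace G]
  {f : H → EReal} {g : G → EReal} {A : H →L[ℝ] G} {c : ℝ}
  {M₁ : ℕ → H →L[ℝ] H} {M₂ : ℕ → G →L[ℝ] G} {x : ℕ → H} {z y : ℕ → G}
  (h : IsVMADMMSeq f g A c M₁ M₂ x z y) {xs : H} {zs ys : G}
include h

lemma antitone_admmLyapunov {p : H} {q v : G} (hs : IsSaddle (Lagr f g A) p q v) :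
    Antitone (admmLyapunov c M₁ M₂ x z y p q v) :=
  antitone_nat_of_succ_le fun k => by
    linarith [h.admmLyapunov_succ_add_admmResidual_le hs k, h.admmResidual_nonneg (k + 1)]

lemma exists_tendsto_admmLyapunov {p : H} {q v : G} (hs : IsSaddle (Lagr f g A) p q v) :
    ∃ ℓ, Tendsto (admmLyapunov c M₁ M₂ x z y p q v) atTop (𝓝 ℓ) :=
  ⟨_, tendsto_atTop_ciInf (h.antitone_admmLyapunov hs)
    ⟨0, by rintro _ ⟨k, rfl⟩; exact h.admmLyapunov_nonneg p q v k⟩⟩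

variable (hs : IsSaddle (Lagr f g A) xs zs ys)
include hs

lemma tendsto_admmResidual : Tendsto (admmResidual c M₁ x z y) atTop (𝓝 0) := by
  obtain ⟨ℓ, hℓ⟩ := h.exists_tendsto_admmLyapunov hs
  have hdiff : Tendsto (fun k => admmLyapunov c M₁ M₂ x z y xs zs ys k -
      admmLyapunov c M₁ M₂ x z y xs zs ys (k + 1)) atTop (𝓝 0) := by
    simpa using hℓ.sub (hℓ.comp (tendsto_add_atTop_nat 1))
  rw [← tendsto_add_atTop_iff_nat 1]
  exact squeeze_zero (fun k => h.admmResidual_nonneg _)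
    (fun k => by linarith [h.admmLyapunov_succ_add_admmResidual_le hs k]) hdiff

lemma tendsto_y_succ_sub : Tendsto (fun k => y (k + 1) - y k) atTop (𝓝 0) :=
  tendsto_zero_of_mul_sq_norm_le (inv_pos.2 h.c_pos) (h.tendsto_admmResidual hs) fun k => by
    have := (h.splus₁ k).opSq_nonneg (x (k + 1) - x k)
    have := mul_nonneg h.c_pos.le (sq_nonneg ‖z (k + 1) - z k‖)
    unfold admmResidual
    linarith

lemma tendsto_z_succ_sub : Tendsto (fun k => z (k + 1) - z k) atTop (𝓝 0) :=
  tendsto_zero_of_mul_sq_norm_le h.c_pos (h.tendsto_admmResidual hs) fun k => by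
    have := (h.splus₁ k).opSq_nonneg (x (k + 1) - x k)
    have := mul_nonneg (inv_pos.2 h.c_pos).le (sq_nonneg ‖y (k + 1) - y k‖)
    unfold admmResidual
    linarith

lemma tendsto_opSq_x_succ_sub : Tendsto (fun k => opSq (M₁ k) (x (k + 1) - x k)) atTop (𝓝 0) :=
  squeeze_zero (fun k => (h.splus₁ k).opSq_nonneg _) (fun k => by
    have := mul_nonneg h.c_pos.le (sq_nonneg ‖z (k + 1) - z k‖)
    have := mul_nonneg (inv_pos.2 h.c_pos).le (sq_nonneg ‖y (k + 1) - y k‖)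
    unfold admmResidual
    linarith) (h.tendsto_admmResidual hs)

lemma exists_forall_norm_z_le : ∃ B, ∀ k, ‖z k‖ ≤ B :=
  exists_forall_norm_le_of_mul_sq_le h.c_pos (p := zs)
    (C := admmLyapunov c M₁ M₂ x z y xs zs ys 0) fun k => by
    have := h.antitone_admmLyapunov hs (Nat.zero_le k)
    have := (h.splus₁ (k + 1)).opSq_nonneg (x (k + 1) - xs)
    have := (h.splus₂ (k + 1)).opSq_nonneg (z (k + 1) - zs)
    have := (h.splus₂ k).opSq_nonneg (z (k + 1) - z k)
    have := mul_nonneg (inv_pos.2 h.c_pos).le (sq_nonneg ‖y (k + 1) - ys‖)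
    unfold admmLyapunov at *
    linarith

lemma exists_forall_norm_y_le : ∃ B, ∀ k, ‖y k‖ ≤ B :=
  exists_forall_norm_le_of_mul_sq_le (inv_pos.2 h.c_pos) (p := ys)
    (C := admmLyapunov c M₁ M₂ x z y xs zs ys 0) fun k => by
    have := h.antitone_admmLyapunov hs (Nat.zero_le k)
    have := (h.splus₁ (k + 1)).opSq_nonneg (x (k + 1) - xs)
    have := (h.splus₂ (k + 1)).opSq_nonneg (z (k + 1) - zs)
    have := (h.splus₂ k).opSq_nonneg (z (k + 1) - z k)
    have := mul_nonneg h.c_pos.le (sq_nonneg ‖z (k + 1) - zs‖)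
    unfold admmLyapunov at *
    linarith

variable {α : ℝ} (hα : 0 < α) (hA : IsPalphaOp α ((ContinuousLinearMap.adjoint A).comp A))
include hα hA

lemma exists_forall_norm_x_succ_le : ∃ B, ∀ k, ‖x (k + 1)‖ ≤ B := by
  obtain ⟨Bz, hBz⟩ := h.exists_forall_norm_z_le hs
  obtain ⟨By, hBy⟩ := h.exists_forall_norm_y_le hs
  refine ⟨(Bz + c⁻¹ * (By + By)) / √α, fun k => (hA.norm_le hα _).trans ?_⟩
  gcongr
  rw [← sub_add_cancel (A (x (k + 1))) (z (k + 1)), h.apply_sub_eq_inv_smul k, add_comm]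
  calc ‖z (k + 1) + c⁻¹ • (y (k + 1) - y k)‖
      ≤ ‖z (k + 1)‖ + c⁻¹ * ‖y (k + 1) - y k‖ := (norm_add_le _ _).trans_eq (by
        rw [norm_smul, Real.norm_of_nonneg (inv_pos.2 h.c_pos).le])
    _ ≤ Bz + c⁻¹ * (By + By) := by
        have := h.c_pos
        gcongr
        · exact hBz _
        · exact (norm_sub_le _ _).trans (add_le_add (hBy _) (hBy _))


lemma tendsto_admmError (u : H) (w : G) :
    Tendsto (admmError c A M₁ M₂ x z y u w) atTop (𝓝 0) := by
  obtain ⟨Bx, hBx⟩ := h.exists_forall_norm_x_succ_le hs hα hA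
  obtain ⟨Bz, hBz⟩ := h.exists_forall_norm_z_le hs
  obtain ⟨By, hBy⟩ := h.exists_forall_norm_y_le hs
  have hdz := h.tendsto_z_succ_sub hs
  have t₁ : Tendsto (fun k => c⁻¹ * ⟪y (k + 1), y (k + 1) - y k⟫_ℝ) atTop (𝓝 0) := by
    simpa [real_inner_comm] using (tendsto_inner_zero_of_tendsto_zero (h.tendsto_y_succ_sub hs)
      fun k => hBy (k + 1)).const_mul c⁻¹
  have hAb : ∀ k, ‖A (u - x (k + 1))‖ ≤ ‖A‖ * (‖u‖ + Bx) := fun k =>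
    (A.le_opNorm _).trans (by gcongr; exact (norm_sub_le _ _).trans (by gcongr; exact hBx k))
  have t₂ : Tendsto (fun k => c * ⟪z (k + 1) - z k, A (u - x (k + 1))⟫_ℝ) atTop (𝓝 0) := by
    simpa only [mul_zero] using (tendsto_inner_zero_of_tendsto_zero hdz hAb).const_mul c
  have t₃ := tendsto_inner_apply_zero h.splus₁ (fun k => opLE_of_le h.antitone₁ (Nat.zero_le k))
    (h.tendsto_opSq_x_succ_sub hs) (b := fun k => u - x (k + 1)) (B := ‖u‖ + Bx) fun k =>
      (norm_sub_le _ _).trans (by gcongr; exact hBx k)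
  have hdz' : Tendsto (fun k => opSq (M₂ k) (z (k + 1) - z k)) atTop (𝓝 0) :=
    squeeze_zero (fun k => (h.splus₂ k).opSq_nonneg _)
      (fun k => (opLE_of_le h.antitone₂ (Nat.zero_le k) _).trans (opSq_le_opNorm_mul_sq _ _))
      (by simpa using ((tendsto_norm.comp hdz).pow 2).const_mul ‖M₂ 0‖)
  have t₄ := tendsto_inner_apply_zero h.splus₂ (fun k => opLE_of_le h.antitone₂ (Nat.zero_le k))
    hdz' (b := fun k => w - z (k + 1)) (B := ‖w‖ + Bz) fun k =>
      (norm_sub_le _ _).trans (by gcongr; exact hBz _)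
  have := ((t₁.neg.add t₂).add t₃).add t₄
  rw [neg_zero, add_zero, add_zero, add_zero] at this
  exact this

lemma exists_forall_toReal_mem_Icc : ∃ lo hi, ∀ k, (f (x (k + 1))).toReal ∈ Set.Icc lo hi := by
  obtain ⟨rf, rg, hrf, hrg⟩ := hs.exists_coe h.f_proper h.g_proper
  obtain ⟨Bx, hBx⟩ := h.exists_forall_norm_x_succ_le hs hα hA
  obtain ⟨Bz, hBz⟩ := h.exists_forall_norm_z_le hs
  obtain ⟨δ, hδ⟩ := (h.tendsto_admmError hs hα hA xs zs).bddAbove_range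
  have hf := fun k => (hs.hasSubgradientAt_left h.f_proper h.g_proper).sub_norm_mul_le hrf
    (h.f_eq k) (hBx k)
  have hg := fun k => (hs.hasSubgradientAt_right h.f_proper h.g_proper).sub_norm_mul_le hrg
    (h.g_eq k) (hBz (k + 1))
  refine ⟨_, rf + rg + δ - (rg - ‖ys‖ * (Bz + ‖zs‖)), fun k => ⟨hf k, ?_⟩⟩
  have := h.toReal_add_toReal_le k hrf hrg
  rw [hs.apply_eq h.f_proper h.g_proper, sub_self, inner_zero_right] at this
  linarith [hg k, hδ ⟨k, rfl⟩]

lemma isSaddle_of_weakConvAlong (hfc : ERealConvex f) (hfl : LowerSemicontinuous f)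
    (hgc : ERealConvex g) (hgl : LowerSemicontinuous g) {φ : ℕ → ℕ} {p : H} {q v : G}
    (hφ : WeakConvAlong φ x z y p q v) : IsSaddle (Lagr f g A) p q v := by
  obtain ⟨hφ, hx, hz, hy⟩ := hφ
  have hpq : A p = q := by
    rw [← sub_eq_zero]
    refine ((hx.map A).sub hz).eq_of_tendsto ?_
    simpa only [Function.comp_def, h.apply_sub_eq_inv_smul, smul_zero] using
      ((h.tendsto_y_succ_sub hs).const_smul c⁻¹).comp hφ
  obtain ⟨lo, hi, hI⟩ := h.exists_forall_toReal_mem_Icc hs hα hA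
  refine isSaddle_lagr_of_forall_le hpq fun u w => ?_
  rcases eq_or_ne (f u) ⊤ with hu | hu
  · have : Lagr f g A u w v = ⊤ := by
      rw [Lagr, hu, EReal.top_add_of_ne_bot (h.g_proper.1 w),
        EReal.top_add_of_ne_bot (EReal.coe_ne_bot _)]
    exact this ▸ le_top
  rcases eq_or_ne (g w) ⊤ with hw | hw
  · have : Lagr f g A u w v = ⊤ := by
      rw [Lagr, hw, EReal.add_top_of_ne_bot (h.f_proper.1 u),
        EReal.top_add_of_ne_bot (EReal.coe_ne_bot _)]
    exact this ▸ le_top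
  have hu' := (EReal.coe_toReal hu (h.f_proper.1 u)).symm
  have hw' := (EReal.coe_toReal hw (h.g_proper.1 w)).symm
  rw [lagr_coe hu' hw', Lagr, hpq, sub_self, inner_zero_right, EReal.coe_zero, add_zero]
  refine add_le_of_weakConv hfc hfl hgc hgl hx hz (fun j => h.f_eq (φ j)) (fun j => h.g_eq (φ j))
    (fun j => hI (φ j)) (fun j => h.toReal_add_toReal_le (φ j) hu' hw') ?_
  simpa using (tendsto_const_nhds.add (hy (A u - w))).add
    ((h.tendsto_admmError hs hα hA u w).comp hφ)

lemma tendsto_admmLyapunov_sub_admmLyapunov {L₁ : H → H} {L₂ : G → G}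
    (hL₁ : ∀ d, Tendsto (fun k => M₁ k d) atTop (𝓝 (L₁ d)))
    (hL₂ : ∀ d, Tendsto (fun k => M₂ k d) atTop (𝓝 (L₂ d))) (p₁ p₂ : H) (q₁ q₂ v₁ v₂ : G)
    {φ : ℕ → ℕ} {p : H} {q v : G} (hφ : WeakConvAlong φ x z y p q v) :
    Tendsto (fun j => admmLyapunov c M₁ M₂ x z y p₁ q₁ v₁ (φ j) -
        admmLyapunov c M₁ M₂ x z y p₂ q₂ v₂ (φ j)) atTop
      (𝓝 ((⟪p₁, L₁ p₁⟫_ℝ - ⟪p₂, L₁ p₂⟫_ℝ - 2 * ⟪p, L₁ (p₁ - p₂)⟫_ℝ)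
        + (⟪q₁, L₂ q₁⟫_ℝ - ⟪q₂, L₂ q₂⟫_ℝ - 2 * ⟪q, L₂ (q₁ - q₂)⟫_ℝ)
        + c * (‖q₁‖ ^ 2 - ‖q₂‖ ^ 2 - 2 * ⟪q, q₁ - q₂⟫_ℝ)
        + c⁻¹ * (‖v₁‖ ^ 2 - ‖v₂‖ ^ 2 - 2 * ⟪v, v₁ - v₂⟫_ℝ))) := by
  obtain ⟨hφ, hx, hz, hy⟩ := hφ
  obtain ⟨Bx, hBx⟩ := h.exists_forall_norm_x_succ_le hs hα hA
  obtain ⟨Bz, hBz⟩ := h.exists_forall_norm_z_le hs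
  have hφ' : Tendsto (fun j => φ j + 1) atTop atTop := (tendsto_add_atTop_nat 1).comp hφ
  have tx := hx.tendsto_opSq_sub_sub_opSq_sub (fun j => hBx (φ j)) (fun j => h.splus₁ (φ j + 1))
    (fun d => (hL₁ d).comp hφ') p₁ p₂
  have tz := hz.tendsto_opSq_sub_sub_opSq_sub (fun j => hBz (φ j + 1))
    (fun j => h.splus₂ (φ j + 1)) (fun d => (hL₂ d).comp hφ') q₁ q₂
  refine (((tx.add tz).add ((hz.tendsto_norm_sub_sq_sub_norm_sub_sq q₁ q₂).const_mul c)).add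
    ((hy.tendsto_norm_sub_sq_sub_norm_sub_sq v₁ v₂).const_mul c⁻¹)).congr fun j => ?_
  unfold admmLyapunov
  ring

lemma eq_of_weakConvAlong {φ₁ φ₂ : ℕ → ℕ} {p₁ p₂ : H} {q₁ q₂ v₁ v₂ : G}
    (hs₁ : IsSaddle (Lagr f g A) p₁ q₁ v₁) (hs₂ : IsSaddle (Lagr f g A) p₂ q₂ v₂)
    (h₁ : WeakConvAlong φ₁ x z y p₁ q₁ v₁) (h₂ : WeakConvAlong φ₂ x z y p₂ q₂ v₂) :
    p₁ = p₂ ∧ q₁ = q₂ ∧ v₁ = v₂ := by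
  obtain ⟨L₁, hL₁⟩ := exists_tendsto_apply_of_antitone h.splus₁ h.antitone₁
  obtain ⟨L₂, hL₂⟩ := exists_tendsto_apply_of_antitone h.splus₂ h.antitone₂
  obtain ⟨ℓ₁, hℓ₁⟩ := h.exists_tendsto_admmLyapunov hs₁
  obtain ⟨ℓ₂, hℓ₂⟩ := h.exists_tendsto_admmLyapunov hs₂
  have e₁ := tendsto_nhds_unique ((hℓ₁.sub hℓ₂).comp h₁.1)
    (h.tendsto_admmLyapunov_sub_admmLyapunov hs hα hA hL₁ hL₂ p₁ p₂ q₁ q₂ v₁ v₂ h₁)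
  have e₂ := tendsto_nhds_unique ((hℓ₁.sub hℓ₂).comp h₂.1)
    (h.tendsto_admmLyapunov_sub_admmLyapunov hs hα hA hL₁ hL₂ p₁ p₂ q₁ q₂ v₁ v₂ h₂)
  have hL₁pos : 0 ≤ ⟪p₁ - p₂, L₁ (p₁ - p₂)⟫_ℝ := ge_of_tendsto
    (tendsto_const_nhds.inner (hL₁ _)) (Eventually.of_forall fun k => (h.splus₁ k).opSq_nonneg _)
  have hL₂pos : 0 ≤ ⟪q₁ - q₂, L₂ (q₁ - q₂)⟫_ℝ := ge_of_tendsto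
    (tendsto_const_nhds.inner (hL₂ _)) (Eventually.of_forall fun k => (h.splus₂ k).opSq_nonneg _)
  -- Both limits of the difference of the two Fejér functionals equal `ℓ₁ - ℓ₂`; they differ by
  -- twice the squared distance of the two cluster points in the limit metrics.
  have hsum : ⟪p₁ - p₂, L₁ (p₁ - p₂)⟫_ℝ + ⟪q₁ - q₂, L₂ (q₁ - q₂)⟫_ℝ + c * ‖q₁ - q₂‖ ^ 2
      + c⁻¹ * ‖v₁ - v₂‖ ^ 2 = 0 := by
    rw [← real_inner_self_eq_norm_sq, ← real_inner_self_eq_norm_sq, inner_sub_left, inner_sub_left,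
      inner_sub_left (q₁ : G), inner_sub_left (v₁ : G)]
    linear_combination (-1 / 2 : ℝ) * (e₂ - e₁)
  have hq₀ := mul_nonneg h.c_pos.le (sq_nonneg ‖q₁ - q₂‖)
  have hv₀ := mul_nonneg (inv_pos.2 h.c_pos).le (sq_nonneg ‖v₁ - v₂‖)
  have hq : q₁ = q₂ := by
    have : c * ‖q₁ - q₂‖ ^ 2 = 0 := by linarith
    simpa [h.c_pos.ne', sub_eq_zero] using this
  have hv : v₁ = v₂ := by
    have : c⁻¹ * ‖v₁ - v₂‖ ^ 2 = 0 := by linarith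
    simpa [h.c_pos.ne', sub_eq_zero] using this
  refine ⟨?_, hq, hv⟩
  rw [← sub_eq_zero, ← norm_le_zero_iff]
  refine (hA.norm_le hα _).trans_eq ?_
  rw [map_sub, hs₁.apply_eq h.f_proper h.g_proper, hs₂.apply_eq h.f_proper h.g_proper, hq, sub_self,
    norm_zero, zero_div]

lemma exists_weakConvAlong {ns : ℕ → ℕ} (hns : Tendsto ns atTop atTop) :
    ∃ (ms : ℕ → ℕ) (p : H) (q v : G), WeakConvAlong (fun j => ns (ms j)) x z y p q v := by
  obtain ⟨Bx, hBx⟩ := h.exists_forall_norm_x_succ_le hs hα hA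
  obtain ⟨Bz, hBz⟩ := h.exists_forall_norm_z_le hs
  obtain ⟨By, hBy⟩ := h.exists_forall_norm_y_le hs
  obtain ⟨p, φ₁, hφ₁, hp⟩ := exists_weakConv_subseq (u := fun j => x (ns j + 1)) fun j => hBx _
  obtain ⟨q, φ₂, hφ₂, hq⟩ := exists_weakConv_subseq (u := fun j => z (ns (φ₁ j) + 1))
    fun j => hBz _
  obtain ⟨v, φ₃, hφ₃, hv⟩ := exists_weakConv_subseq (u := fun j => y (ns (φ₁ (φ₂ j)) + 1))
    fun j => hBy _
  have h₃ := hφ₃.tendsto_atTop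
  have h₂₃ := hφ₂.tendsto_atTop.comp h₃
  exact ⟨fun j => φ₁ (φ₂ (φ₃ j)), p, q, v, hns.comp (hφ₁.tendsto_atTop.comp h₂₃), hp.comp h₂₃,
    hq.comp h₃, hv⟩

lemma exists_isSaddle_weakConv (hfc : ERealConvex f) (hfl : LowerSemicontinuous f)
    (hgc : ERealConvex g) (hgl : LowerSemicontinuous g) :
    ∃ (p : H) (q v : G), IsSaddle (Lagr f g A) p q v ∧ WeakConv x p ∧ WeakConv z q ∧
      WeakConv y v := by
  have hsaddle : ∀ {φ p q v}, WeakConvAlong φ x z y p q v → IsSaddle (Lagr f g A) p q v :=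
    fun hφ => h.isSaddle_of_weakConvAlong hs hα hA hfc hfl hgc hgl hφ
  obtain ⟨φ₀, p, q, v, h₀⟩ := h.exists_weakConvAlong hs hα hA tendsto_id
  have hsub : ∀ ns : ℕ → ℕ, Tendsto ns atTop atTop →
      ∃ ms : ℕ → ℕ, WeakConvAlong (fun j => ns (ms j)) x z y p q v := by
    intro ns hns
    obtain ⟨ms, p', q', v', h'⟩ := h.exists_weakConvAlong hs hα hA hns
    obtain ⟨rfl, rfl, rfl⟩ :=
      h.eq_of_weakConvAlong hs hα hA (hsaddle h') (hsaddle h₀) h' h₀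
    exact ⟨ms, h'⟩
  refine ⟨p, q, v, hsaddle h₀, ?_, ?_, ?_⟩ <;>
    refine WeakConv.of_succ (weakConv_of_forall_subseq fun ns hns => ?_)
  · exact (hsub ns hns).imp fun _ h' => h'.2.1
  · exact (hsub ns hns).imp fun _ h' => h'.2.2.1
  · exact (hsub ns hns).imp fun _ h' => h'.2.2.2

end IsVMADMMSeq

theorem stmt18 {H G : Type*}
    [NormedAddCommGroup H] [InnerProductSpace ℝ H] [CompleteSpace H]
    [NormedAddCommGroup G] [InnerProductSpace ℝ G] [CompleteSpace G]
    (f : H → EReal) (g : G → EReal)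
    (hfp : ERealProper f) (hfc : ERealConvex f) (hfl : LowerSemicontinuous f)
    (hgp : ERealProper g) (hgc : ERealConvex g) (hgl : LowerSemicontinuous g)
    (A : H →L[ℝ] G) (c : ℝ) (hc : 0 < c)
    (M₁ : ℕ → (H →L[ℝ] H)) (M₂ : ℕ → (G →L[ℝ] G))
    (hM₁ : ∀ k : ℕ, IsSplusOp (M₁ k)) (hM₂ : ∀ k : ℕ, IsSplusOp (M₂ k))
    (hM₁mono : ∀ k : ℕ, opLE (M₁ k) (M₁ (k+1)))
    (x : ℕ → H) (z y : ℕ → G)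
    (hx : ∀ k : ℕ, IsXUpdate f A c (M₁ k) (x k) (z k) (y k) (x (k+1)))
    (hz : ∀ k : ℕ, IsZUpdate g c (M₂ k) (A (x (k+1))) (z k) (y k) (z (k+1)))
    (hy : ∀ k : ℕ, y (k+1) = y k + c • (A (x (k+1)) - z (k+1)))
    (hsaddle : ∃ (xs : H) (zs ys : G), IsSaddle (Lagr f g A) xs zs ys)
    (α : ℝ) (hα : 0 < α)
    (hA : IsPalphaOp α ((ContinuousLinearMap.adjoint A).comp A))
    (hM₂chain : ∀ k : ℕ, opLE ((2 : ℝ) • M₂ (k+1)) (M₂ k) ∧ opLE (M₂ k) (M₂ (k+1))) :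
    ∃ (xs : H) (zs ys : G), IsSaddle (Lagr f g A) xs zs ys ∧
      WeakConv x xs ∧ WeakConv z zs ∧ WeakConv y ys := by
  obtain ⟨xs, zs, ys, hs⟩ := hsaddle
  have h : IsVMADMMSeq f g A c M₁ M₂ x z y :=
    .of_updates hfp hfc hgp hgc hc hM₁ hM₂ hM₁mono hM₂chain hx hz hy
  exact h.exists_isSaddle_weakConv hs hα hA hfc hfl hgc hgl
end
end

section
/- Assume h = 0, M₁ᵏ ∈ S₊(H), M₁ᵏ ⪰ M₁^{k+1}, M₂ᵏ ∈ S₊(G), 2M₂^{k+1} ⪰ M₂ᵏ ⪰ M₂^{k+1} for all k ≥ 0, let (xᵏ, zᵏ, yᵏ)_{k≥0} be the sequence generated by the variable-metric ADMM algorithm, and let (x*, z*, y*) be a saddle point of the Lagrangian l. Then for all k ≥ 1: (1/2)‖x^{k+1} − x*‖²_{M₁^{k+1}} + (1/2)‖z^{k+1} − Ax*‖²_{M₂^{k+1} + c·Id} + (1/(2c))‖y^{k+1} − y*‖² + (1/2)‖z^{k+1} − zᵏ‖²_{M₂ᵏ} ≤ (1/2)‖xᵏ − x*‖²_{M₁ᵏ}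 + (1/2)‖zᵏ − Ax*‖²_{M₂ᵏ + c·Id} + (1/(2c))‖yᵏ − y*‖² + (1/2)‖zᵏ − z^{k−1}‖²_{M₂^{k−1}} − (1/2)‖x^{k+1} − xᵏ‖²_{M₁ᵏ} − (c/2)‖z^{k+1} − zᵏ‖² − (1/(2c))‖y^{k+1} − yᵏ‖². -/
/-!
Both subproblems are minimised by convex functions plus smooth quadratics, so their first-order
optimality conditions say that `-A*(yᵏ⁺¹ + c(zᵏ⁺¹ - zᵏ)) - M₁ᵏ(xᵏ⁺¹ - xᵏ) ∈ ∂f(xᵏ⁺¹)` and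
`yᵏ⁺¹ - M₂ᵏ(zᵏ⁺¹ - zᵏ) ∈ ∂g(zᵏ⁺¹)`. Testing these at the saddle point (where `Ax* = z*`) and adding
the saddle inequality leaves inner products that the three-point identity
`2⟪s - b, U(b - d)⟫ = ‖d - s‖²_U - ‖b - s‖²_U - ‖b - d‖²_U` turns into differences of squared
seminorms, up to the cross term `⟪zᵏ⁺¹ - zᵏ, yᵏ⁺¹ - yᵏ⟫`. Monotonicity of `∂g` at `zᵏ` and `zᵏ⁺¹`
bounds that term below by `‖zᵏ⁺¹ - zᵏ‖²_{M₂ᵏ} - ⟪zᵏ⁺¹ - zᵏ, M₂ᵏ⁻¹(zᵏ - zᵏ⁻¹)⟫`, and Cauchy–Schwarz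
together with `2M₂ᵏ ⪰ M₂ᵏ⁻¹` absorbs the last inner product. Finally `M₁ᵏ ⪰ M₁ᵏ⁺¹` and
`M₂ᵏ ⪰ M₂ᵏ⁺¹` pass to the metrics of the next step.
-/

open scoped InnerProductSpace
open Filter

noncomputable section

open Topology

section Quadratic

variable {E : Type*} [NormedAddCommGroup E] [InnerProductSpace ℝ E]

theorem opSq_add_smul_id (U : E →L[ℝ] E) (c : ℝ) (x : E) :
    opSq (U + c • ContinuousLinearMap.id ℝ E) x = opSq U x + c * ‖x‖ ^ 2 := by
  simp only [opSq, add_apply, smul_apply,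
    ContinuousLinearMap.id_apply, inner_add_right, real_inner_smul_right,
    real_inner_self_eq_norm_sq]

theorem LinearMap.IsSymmetric.real_inner_apply_comm {U : E →L[ℝ] E}
    (hU : (U : E →ₗ[ℝ] E).IsSymmetric) (p q : E) : ⟪p, U q⟫_ℝ = ⟪q, U p⟫_ℝ := by
  rw [real_inner_comm]
  exact hU q p

theorem opSq_add_smul {U : E →L[ℝ] E} (hU : (U : E →ₗ[ℝ] E).IsSymmetric) (p d : E) (t : ℝ) :
    opSq U (p + t • d) = opSq U p + t * (2 * ⟪d, U p⟫_ℝ) + t ^ 2 * opSq U d := by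
  simp only [opSq, map_add, map_smul, inner_add_left, inner_add_right,
    real_inner_smul_left, real_inner_smul_right]
  linear_combination t * hU.real_inner_apply_comm p d

theorem norm_add_smul_sq (v w : E) (t : ℝ) :
    ‖v + t • w‖ ^ 2 = ‖v‖ ^ 2 + t * (2 * ⟪w, v⟫_ℝ) + t ^ 2 * ‖w‖ ^ 2 := by
  rw [norm_add_sq_real, real_inner_smul_right, norm_smul, mul_pow, Real.norm_eq_abs, sq_abs,
    real_inner_comm]
  ring

theorem two_mul_inner_sub_map_sub {U : E →L[ℝ] E} (hU : (U : E →ₗ[ℝ] E).IsSymmetric)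
    (s b d : E) :
    2 * ⟪s - b, U (b - d)⟫_ℝ = opSq U (d - s) - opSq U (b - s) - opSq U (b - d) := by
  simp only [opSq, map_sub, inner_sub_left, inner_sub_right]
  linarith [hU.real_inner_apply_comm s b, hU.real_inner_apply_comm s d,
    hU.real_inner_apply_comm b d]

theorem two_mul_inner_sub_sub (s b d : E) :
    2 * ⟪s - b, b - d⟫_ℝ = ‖d - s‖ ^ 2 - ‖b - s‖ ^ 2 - ‖b - d‖ ^ 2 := by
  simpa [opSq, real_inner_self_eq_norm_sq] using
    two_mul_inner_sub_map_sub (U := ContinuousLinearMap.id ℝ E) (fun _ _ => rfl) s b d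

theorem IsSplusOp.two_mul_inner_le_s19 {U : E →L[ℝ] E} (hU : IsSplusOp U) (a b : E) :
    2 * ⟪a, U b⟫_ℝ ≤ opSq U a + opSq U b := by
  have h := hU.2 (a - b)
  simp only [map_sub, inner_sub_left, inner_sub_right] at h
  unfold opSq
  linarith [LinearMap.IsSymmetric.real_inner_apply_comm hU.1 a b]

end Quadratic

theorem nonneg_of_forall_nonneg_add_mul {a b : ℝ}
    (h : ∀ t : ℝ, 0 < t → t ≤ 1 → 0 ≤ a + t * b) : 0 ≤ a := by
  have hlim : Tendsto (fun t : ℝ => a + t * b) (𝓝[>] 0) (𝓝 a) := by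
    have h0 : Continuous fun t : ℝ => a + t * b := by fun_prop
    simpa using (h0.tendsto 0).mono_left nhdsWithin_le_nhds
  refine ge_of_tendsto hlim ?_
  filter_upwards [Ioc_mem_nhdsGT one_pos] with t ht using h t ht.1 ht.2

section Minimizer

variable {E : Type*} {f : E → EReal} {φ : E → ℝ} {m : E}

theorem ERealProper.exists_eq_coe_of_forall_add_le (hf : ERealProper f)
    (hmin : ∀ u, f m + φ m ≤ f u + φ u) : ∃ r : ℝ, f m = r := by
  obtain ⟨u, hu⟩ := hf.2
  have hm : f m ≠ ⊤ := fun htop => by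
    have h := hmin u
    rw [htop, EReal.top_add_coe, top_le_iff] at h
    exact (EReal.add_lt_top hu (EReal.coe_ne_top _)).ne h
  exact ⟨(f m).toReal, (EReal.coe_toReal hm (hf.1 m)).symm⟩

variable [NormedAddCommGroup E] [InnerProductSpace ℝ E]

/-- First-order optimality: `L` is the derivative of `φ` at `m` in the direction `u - m`. -/
theorem ERealConvex.le_add_of_forall_add_le (hf : ERealConvex f) {u : E} {fm fu L B : ℝ}
    (hm : f m = fm) (hu : f u = fu) (hmin : ∀ v, f m + φ m ≤ f v + φ v)
    (hφ : ∀ t : ℝ, 0 < t → t ≤ 1 → φ (m + t • (u - m)) = φ m + t * L + t ^ 2 * B) :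
    fm ≤ fu + L := by
  refine sub_nonneg.mp (nonneg_of_forall_nonneg_add_mul (b := B) fun t ht0 ht1 => ?_)
  have hconv : f (m + t • (u - m)) ≤ ((1 - t) * fm + t * fu : ℝ) := by
    have h := hf m u (1 - t) t (by linarith) ht0.le (by ring)
    rwa [hm, hu, show (1 - t) • m + t • u = m + t • (u - m) by module, ← EReal.coe_mul,
      ← EReal.coe_mul, ← EReal.coe_add] at h
  have hle : fm + φ m ≤ (1 - t) * fm + t * fu + φ (m + t • (u - m)) := by
    have h := (hmin _).trans (add_le_add_left hconv _)
    rw [hm] at h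
    exact_mod_cast h
  rw [hφ t ht0 ht1] at hle
  exact nonneg_of_mul_nonneg_right (a := t) (by nlinarith) ht0

end Minimizer

section Updates

variable {E F : Type*} [NormedAddCommGroup E] [InnerProductSpace ℝ E]
  [NormedAddCommGroup F] [InnerProductSpace ℝ F] {c : ℝ}

theorem smul_add_inv_smul_eq (hc : c ≠ 0) {w y y' : F} (hy : y' = y + c • w) :
    c • (w + c⁻¹ • y) = y' := by
  rw [smul_add, smul_smul, mul_inv_cancel₀ hc, one_smul, hy, add_comm]

theorem IsXUpdate.le_add_inner {f : E → EReal} (hf : ERealConvex f) {A : E →L[ℝ] F}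
    {M : E →L[ℝ] E} (hM : (M : E →ₗ[ℝ] E).IsSymmetric) (hc : c ≠ 0) {xk m u : E}
    {zk yk zk1 yk1 : F} (hx : IsXUpdate f A c M xk zk yk m) (hy : yk1 = yk + c • (A m - zk1))
    {fm fu : ℝ} (hm : f m = fm) (hu : f u = fu) :
    fm ≤ fu + (⟪A (u - m), yk1 + c • (zk1 - zk)⟫_ℝ + ⟪u - m, M (m - xk)⟫_ℝ) := by
  have hmult : c • (A m - zk + c⁻¹ • yk) = yk1 + c • (zk1 - zk) :=
    smul_add_inv_smul_eq hc (by rw [hy]; module)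
  rw [← hmult, real_inner_smul_right]
  refine hf.le_add_of_forall_add_le
    (φ := fun v => c / 2 * ‖A v - zk + c⁻¹ • yk‖ ^ 2 + 1 / 2 * opSq M (v - xk))
    (B := c / 2 * ‖A (u - m)‖ ^ 2 + 1 / 2 * opSq M (u - m)) hm hu hx fun t _ _ => ?_
  rw [map_add, map_smul, show A m + t • A (u - m) - zk + c⁻¹ • yk
      = (A m - zk + c⁻¹ • yk) + t • A (u - m) by abel,
    show m + t • (u - m) - xk = (m - xk) + t • (u - m) by abel,
    norm_add_smul_sq, opSq_add_smul hM]
  ring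

theorem IsZUpdate.le_add_inner {g : F → EReal} (hg : ERealConvex g) {M : F →L[ℝ] F}
    (hM : (M : F →ₗ[ℝ] F).IsSymmetric) (hc : c ≠ 0) {w zk yk m yk1 u : F}
    (hz : IsZUpdate g c M w zk yk m) (hy : yk1 = yk + c • (w - m))
    {gm gu : ℝ} (hm : g m = gm) (hu : g u = gu) :
    gm ≤ gu + (⟪m - u, yk1⟫_ℝ + ⟪u - m, M (m - zk)⟫_ℝ) := by
  rw [← smul_add_inv_smul_eq hc hy, real_inner_smul_right]
  refine hg.le_add_of_forall_add_le
    (φ := fun v => c / 2 * ‖w - v + c⁻¹ • yk‖ ^ 2 + 1 / 2 * opSq M (v - zk))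
    (B := c / 2 * ‖m - u‖ ^ 2 + 1 / 2 * opSq M (u - m)) hm hu hz fun t _ _ => ?_
  rw [show w - (m + t • (u - m)) + c⁻¹ • yk = (w - m + c⁻¹ • yk) + t • (m - u) by module,
    show m + t • (u - m) - zk = (m - zk) + t • (u - m) by abel,
    norm_add_smul_sq, opSq_add_smul hM]
  ring

theorem IsXUpdate.exists_eq_coe {f : E → EReal} (hf : ERealProper f) {A : E →L[ℝ] F}
    {M : E →L[ℝ] E} {xk m : E} {zk yk : F} (hx : IsXUpdate f A c M xk zk yk m) :
    ∃ r : ℝ, f m = r :=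
  hf.exists_eq_coe_of_forall_add_le
    (φ := fun v => c / 2 * ‖A v - zk + c⁻¹ • yk‖ ^ 2 + 1 / 2 * opSq M (v - xk)) hx

theorem IsZUpdate.exists_eq_coe {g : F → EReal} (hg : ERealProper g) {M : F →L[ℝ] F}
    {w zk yk m : F} (hz : IsZUpdate g c M w zk yk m) : ∃ r : ℝ, g m = r :=
  hg.exists_eq_coe_of_forall_add_le
    (φ := fun v => c / 2 * ‖w - v + c⁻¹ • yk‖ ^ 2 + 1 / 2 * opSq M (v - zk)) hz

end Updates

section Saddle

variable {E F : Type*} [NormedAddCommGroup E] [InnerProductSpace ℝ E]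
  [NormedAddCommGroup F] [InnerProductSpace ℝ F] {f : E → EReal} {g : F → EReal}
  {A : E →L[ℝ] F} {xs : E} {zs ys : F}

theorem IsSaddle.exists_eq_coe (hfp : ERealProper f) (hgp : ERealProper g)
    (hsp : IsSaddle (Lagr f g A) xs zs ys) : ∃ a b : ℝ, f xs = a ∧ g zs = b := by
  obtain ⟨p, hp⟩ := hfp.2
  obtain ⟨q, hq⟩ := hgp.2
  have hfin : f xs + g zs ≠ ⊤ := fun htop => by
    have h := (hsp p q ys).2
    rw [Lagr, Lagr, htop, EReal.top_add_coe, top_le_iff] at h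
    exact (EReal.add_lt_top (EReal.add_lt_top hp hq).ne (EReal.coe_ne_top _)).ne h
  obtain ⟨hxs, hzs⟩ := (EReal.add_ne_top_iff_ne_top₂ (hfp.1 xs) (hgp.1 zs)).mp hfin
  exact ⟨_, _, (EReal.coe_toReal hxs (hfp.1 xs)).symm, (EReal.coe_toReal hzs (hgp.1 zs)).symm⟩

theorem IsSaddle.map_eq (hsp : IsSaddle (Lagr f g A) xs zs ys) {a b : ℝ} (ha : f xs = a)
    (hb : g zs = b) : A xs = zs := by
  have h := (hsp xs zs (ys + (A xs - zs))).1
  simp only [Lagr, ha, hb, inner_add_left] at h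
  norm_cast at h
  exact sub_eq_zero.mp (real_inner_self_nonpos.mp (by linarith))

theorem IsSaddle.add_le (hsp : IsSaddle (Lagr f g A) xs zs ys) {a b : ℝ} (ha : f xs = a)
    (hb : g zs = b) {p : E} {q : F} {fp gq : ℝ} (hp : f p = fp) (hq : g q = gq) :
    a + b ≤ fp + gq + ⟪ys, A p - q⟫_ℝ := by
  have h := (hsp p q ys).2
  simp only [Lagr, ha, hb, hp, hq, hsp.map_eq ha hb, sub_self, inner_zero_right,
    EReal.coe_zero, add_zero] at h
  exact_mod_cast h

end Saddle

section Step

variable {E F : Type*} [NormedAddCommGroup E] [InnerProductSpace ℝ E]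
  [NormedAddCommGroup F] [InnerProductSpace ℝ F] {f : E → EReal} {g : F → EReal}
  {A : E →L[ℝ] F} {c : ℝ}

theorem admm_step_estimate (hfp : ERealProper f) (hfc : ERealConvex f) (hgp : ERealProper g)
    (hgc : ERealConvex g) {M₁ : E →L[ℝ] E} {M₂ : F →L[ℝ] F}
    (hM₁ : (M₁ : E →ₗ[ℝ] E).IsSymmetric) (hM₂ : (M₂ : F →ₗ[ℝ] F).IsSymmetric) (hc : c ≠ 0)
    {x₀ x₁ xs : E} {z₀ z₁ y₀ y₁ zs ys : F} (hx : IsXUpdate f A c M₁ x₀ z₀ y₀ x₁)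
    (hz : IsZUpdate g c M₂ (A x₁) z₀ y₀ z₁) (hy : y₁ = y₀ + c • (A x₁ - z₁))
    (hsp : IsSaddle (Lagr f g A) xs zs ys) :
    (1/2) * opSq M₁ (x₁ - xs) + (1/2) * opSq M₂ (z₁ - A xs) + (c/2) * ‖z₁ - A xs‖ ^ 2
        + (1/(2*c)) * ‖y₁ - ys‖ ^ 2 + ⟪z₁ - z₀, y₁ - y₀⟫_ℝ ≤
      (1/2) * opSq M₁ (x₀ - xs) + (1/2) * opSq M₂ (z₀ - A xs) + (c/2) * ‖z₀ - A xs‖ ^ 2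
        + (1/(2*c)) * ‖y₀ - ys‖ ^ 2 - (1/2) * opSq M₁ (x₁ - x₀) - (1/2) * opSq M₂ (z₁ - z₀)
        - (c/2) * ‖z₁ - z₀‖ ^ 2 - (1/(2*c)) * ‖y₁ - y₀‖ ^ 2 := by
  obtain ⟨a, b, ha, hb⟩ := hsp.exists_eq_coe hfp hgp
  obtain rfl := hsp.map_eq ha hb
  obtain ⟨fx, hfx⟩ := hx.exists_eq_coe hfp
  obtain ⟨gz, hgz⟩ := hz.exists_eq_coe hgp
  have hX := hx.le_add_inner hfc hM₁ hc hy hfx ha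
  have hZ := hz.le_add_inner hgc hM₂ hc hy hgz hb
  have hS := hsp.add_le ha hb hfx hgz
  have hd : y₁ - y₀ = c • (A x₁ - z₁) := by rw [hy, add_sub_cancel_left]
  have hmult : ⟪A (xs - x₁), y₁ + c • (z₁ - z₀)⟫_ℝ + ⟪z₁ - A xs, y₁⟫_ℝ + ⟪ys, A x₁ - z₁⟫_ℝ
      = ⟪ys - y₁, A x₁ - z₁⟫_ℝ + c * ⟪A xs - z₁, z₁ - z₀⟫_ℝ - c * ⟪z₁ - z₀, A x₁ - z₁⟫_ℝ := by
    rw [map_sub, show A xs - A x₁ = (A xs - z₁) - (A x₁ - z₁) by abel,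
      show z₁ - A xs = -(A xs - z₁) by abel]
    generalize A xs - z₁ = p, A x₁ - z₁ = r, z₁ - z₀ = e
    simp only [inner_sub_left, inner_add_right, inner_neg_left, real_inner_smul_right]
    rw [real_inner_comm e r, real_inner_comm y₁ r]
    ring
  have hy₁ : ⟪ys - y₁, A x₁ - z₁⟫_ℝ
      = 1 / (2 * c) * (‖y₀ - ys‖ ^ 2 - ‖y₁ - ys‖ ^ 2 - ‖y₁ - y₀‖ ^ 2) := by
    rw [← two_mul_inner_sub_sub ys y₁ y₀, hd, real_inner_smul_right]
    field_simp
  have hx₁ := two_mul_inner_sub_map_sub hM₁ xs x₁ x₀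
  have hz₁ := two_mul_inner_sub_map_sub hM₂ (A xs) z₁ z₀
  have hz₁' : c * ⟪A xs - z₁, z₁ - z₀⟫_ℝ
      = c / 2 * (‖z₀ - A xs‖ ^ 2 - ‖z₁ - A xs‖ ^ 2 - ‖z₁ - z₀‖ ^ 2) := by
    rw [← two_mul_inner_sub_sub]
    ring
  have hdz : ⟪z₁ - z₀, y₁ - y₀⟫_ℝ = c * ⟪z₁ - z₀, A x₁ - z₁⟫_ℝ := by
    rw [hd, real_inner_smul_right]
  linarith

/-- Monotonicity of `∂g` between two consecutive `z`-updates. -/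
theorem IsZUpdate.opSq_sub_le (hgp : ERealProper g) (hgc : ERealConvex g) {M M' : F →L[ℝ] F}
    (hM : (M : F →ₗ[ℝ] F).IsSymmetric) (hM' : (M' : F →ₗ[ℝ] F).IsSymmetric) (hc : c ≠ 0)
    {w₁ w₂ z₀ z₁ z₂ y₀ y₁ y₂ : F} (hz₁ : IsZUpdate g c M' w₁ z₀ y₀ z₁)
    (hy₁ : y₁ = y₀ + c • (w₁ - z₁)) (hz₂ : IsZUpdate g c M w₂ z₁ y₁ z₂)
    (hy₂ : y₂ = y₁ + c • (w₂ - z₂)) :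
    opSq M (z₂ - z₁) ≤ ⟪z₂ - z₁, y₂ - y₁⟫_ℝ + ⟪z₂ - z₁, M' (z₁ - z₀)⟫_ℝ := by
  obtain ⟨a₁, ha₁⟩ := hz₁.exists_eq_coe hgp
  obtain ⟨a₂, ha₂⟩ := hz₂.exists_eq_coe hgp
  have h₁ := hz₁.le_add_inner hgc hM' hc hy₁ ha₁ ha₂
  have h₂ := hz₂.le_add_inner hgc hM hc hy₂ ha₂ ha₁
  rw [← neg_sub z₂ z₁, inner_neg_left] at h₁ h₂
  rw [inner_sub_right]
  unfold opSq
  linarith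

end Step

theorem stmt19_general {H G : Type*}
    [NormedAddCommGroup H] [InnerProductSpace ℝ H]
    [NormedAddCommGroup G] [InnerProductSpace ℝ G]
    (f : H → EReal) (g : G → EReal)
    (hfp : ERealProper f) (hfc : ERealConvex f)
    (hgp : ERealProper g) (hgc : ERealConvex g)
    (A : H →L[ℝ] G) (c : ℝ) (hc : 0 < c)
    (M₁ : ℕ → (H →L[ℝ] H)) (M₂ : ℕ → (G →L[ℝ] G))
    (hM₁ : ∀ k : ℕ, IsSplusOp (M₁ k)) (hM₂ : ∀ k : ℕ, IsSplusOp (M₂ k))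
    (hM₁mono : ∀ k : ℕ, opLE (M₁ k) (M₁ (k+1)))
    (x : ℕ → H) (z y : ℕ → G)
    (hx : ∀ k : ℕ, IsXUpdate f A c (M₁ k) (x k) (z k) (y k) (x (k+1)))
    (hz : ∀ k : ℕ, IsZUpdate g c (M₂ k) (A (x (k+1))) (z k) (y k) (z (k+1)))
    (hy : ∀ k : ℕ, y (k+1) = y k + c • (A (x (k+1)) - z (k+1)))
    (hM₂chain : ∀ k : ℕ, opLE ((2 : ℝ) • M₂ (k+1)) (M₂ k) ∧ opLE (M₂ k) (M₂ (k+1)))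
    (xs : H) (zs ys : G)
    (hsp : IsSaddle (Lagr f g A) xs zs ys) :
    ∀ k : ℕ, 1 ≤ k →
      (1/2) * opSq (M₁ (k+1)) (x (k+1) - xs)
        + (1/2) * opSq (M₂ (k+1) + c • ContinuousLinearMap.id ℝ G) (z (k+1) - A xs)
        + (1/(2*c)) * ‖y (k+1) - ys‖ ^ 2
        + (1/2) * opSq (M₂ k) (z (k+1) - z k) ≤
      (1/2) * opSq (M₁ k) (x k - xs)
        + (1/2) * opSq (M₂ k + c • ContinuousLinearMap.id ℝ G) (z k - A xs)
        + (1/(2*c)) * ‖y k - ys‖ ^ 2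
        + (1/2) * opSq (M₂ (k-1)) (z k - z (k-1))
        - (1/2) * opSq (M₁ k) (x (k+1) - x k)
        - (c/2) * ‖z (k+1) - z k‖ ^ 2
        - (1/(2*c)) * ‖y (k+1) - y k‖ ^ 2 := by
  intro k hk
  obtain ⟨j, rfl⟩ : ∃ j, k = j + 1 := ⟨k - 1, by omega⟩
  rw [Nat.add_sub_cancel, opSq_add_smul_id, opSq_add_smul_id]
  have hstep := admm_step_estimate hfp hfc hgp hgc (hM₁ (j + 1)).1 (hM₂ (j + 1)).1 hc.ne'
    (hx (j + 1)) (hz (j + 1)) (hy (j + 1)) hsp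
  have hmon := (hz j).opSq_sub_le hgp hgc (hM₂ (j + 1)).1 (hM₂ j).1 hc.ne' (hy j) (hz (j + 1))
    (hy (j + 1))
  have hcs := (hM₂ j).two_mul_inner_le_s19 (z (j + 1 + 1) - z (j + 1)) (z (j + 1) - z j)
  have hM₂prev : opSq (M₂ j) (z (j + 1 + 1) - z (j + 1))
      ≤ 2 * opSq (M₂ (j + 1)) (z (j + 1 + 1) - z (j + 1)) := by
    simpa only [opSq, smul_apply, real_inner_smul_right] using (hM₂chain j).1 (z (j + 1 + 1) - z (j + 1))
  have hM₁dec : opSq (M₁ (j + 1 + 1)) (x (j + 1 + 1) - xs)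
      ≤ opSq (M₁ (j + 1)) (x (j + 1 + 1) - xs) :=
    hM₁mono (j + 1) _
  have hM₂dec : opSq (M₂ (j + 1 + 1)) (z (j + 1 + 1) - A xs)
      ≤ opSq (M₂ (j + 1)) (z (j + 1 + 1) - A xs) :=
    (hM₂chain (j + 1)).2 _
  linarith

theorem stmt19 {H G : Type*}
    [NormedAddCommGroup H] [InnerProductSpace ℝ H] [CompleteSpace H]
    [NormedAddCommGroup G] [InnerProductSpace ℝ G] [CompleteSpace G]
    (f : H → EReal) (g : G → EReal)
    (hfp : ERealProper f) (hfc : ERealConvex f) (hfl : LowerSemicontinuous f)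
    (hgp : ERealProper g) (hgc : ERealConvex g) (hgl : LowerSemicontinuous g)
    (A : H →L[ℝ] G) (c : ℝ) (hc : 0 < c)
    (M₁ : ℕ → (H →L[ℝ] H)) (M₂ : ℕ → (G →L[ℝ] G))
    (hM₁ : ∀ k : ℕ, IsSplusOp (M₁ k)) (hM₂ : ∀ k : ℕ, IsSplusOp (M₂ k))
    (hM₁mono : ∀ k : ℕ, opLE (M₁ k) (M₁ (k+1)))
    (x : ℕ → H) (z y : ℕ → G)
    (hx : ∀ k : ℕ, IsXUpdate f A c (M₁ k) (x k) (z k) (y k) (x (k+1)))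
    (hz : ∀ k : ℕ, IsZUpdate g c (M₂ k) (A (x (k+1))) (z k) (y k) (z (k+1)))
    (hy : ∀ k : ℕ, y (k+1) = y k + c • (A (x (k+1)) - z (k+1)))
    (hM₂chain : ∀ k : ℕ, opLE ((2 : ℝ) • M₂ (k+1)) (M₂ k) ∧ opLE (M₂ k) (M₂ (k+1)))
    (xs : H) (zs ys : G)
    (hsp : IsSaddle (Lagr f g A) xs zs ys) :
    ∀ k : ℕ, 1 ≤ k →
      (1/2) * opSq (M₁ (k+1)) (x (k+1) - xs)
        + (1/2) * opSq (M₂ (k+1) + c • ContinuousLinearMap.id ℝ G) (z (k+1) - A xs)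
        + (1/(2*c)) * ‖y (k+1) - ys‖ ^ 2
        + (1/2) * opSq (M₂ k) (z (k+1) - z k) ≤
      (1/2) * opSq (M₁ k) (x k - xs)
        + (1/2) * opSq (M₂ k + c • ContinuousLinearMap.id ℝ G) (z k - A xs)
        + (1/(2*c)) * ‖y k - ys‖ ^ 2
        + (1/2) * opSq (M₂ (k-1)) (z k - z (k-1))
        - (1/2) * opSq (M₁ k) (x (k+1) - x k)
        - (c/2) * ‖z (k+1) - z k‖ ^ 2
        - (1/(2*c)) * ‖y (k+1) - y k‖ ^ 2 :=
  stmt19_general f g hfp hfc hgp hgc A c hc M₁ M₂ hM₁ hM₂ hM₁mono x z y hx hz hy hM₂chain xs zs ys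
    hsp
end
end
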